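/- arXiv:2004.01945 — 9 statements merged into one kernel-verified Lean document; each statement's English description precedes it below -/
import Mathlib

section
/- Let b>0, M>0 and let g:ℂ→ℂ be an entire function whose restriction to [0,∞) is real-valued and satisfies |g(u)|≤M·e^{u²/4} for all u≥0. Then for every integer N≥1, as λ→+∞, ∫₀^∞ u^{b−1} g(u) e^{−λu²/2} du = (1/2)·Σ_{k=0}^{N−1} (g^{(k)}(0)/k!)·Γ((b+k)/2)·(λ/2)^{−(b+k)/2} + O(λ^{−(b+N)/2}). (This is the expansion at coalescence εx=1, equation (4.3) of the paper, of Watson's-lemma type.) -/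
/-!
Expand `g` in its Taylor polynomial `P` of degree `< N` at `0`. Against the weight
`u ^ (b - 1) * exp (-λ u² / 2)` each monomial `u ^ k` integrates to the Gaussian moment
`(1/2) Γ((b + k)/2) (λ/2)^{-(b + k)/2}`, which produces the sum. The remainder `Re g - P` is
`O(u ^ N)` on `[0, 1]` by the Taylor series of the entire function `g`, and `O(u ^ N e^{u²/4})`
on `[1, ∞)` by the growth bound, so it is at most `C u ^ N e^{u²/4}` everywhere. For `λ ≥ 1`
the factor `e^{u²/4}` is absorbed into the Gaussian at the price of replacing `λ/2` by `λ/4`,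
and the remainder integral is then at most a Gaussian moment of order `b + N`, i.e.
`O(λ^{-(b + N)/2})`.
-/

open MeasureTheory Real Set Filter Topology Asymptotics Finset Nat

theorem integral_rpow_mul_exp_neg_mul_sq {s a : ℝ} (hs : -1 < s) (ha : 0 < a) :
    ∫ u in Ioi (0 : ℝ), u ^ s * exp (-a * u ^ 2)
      = a ^ (-(s + 1) / 2) * (1 / 2) * Gamma ((s + 1) / 2) := by
  simp_rw [← rpow_two]
  exact integral_rpow_mul_exp_neg_mul_rpow two_pos hs ha

lemma abs_mul_exp_neg_mul_sq_le {x C c s lam u : ℝ} (hx : |x| ≤ C * u ^ s * exp (c * u ^ 2)) :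
    |x * exp (-lam * u ^ 2 / 2)| ≤ C * (u ^ s * exp (-(lam / 2 - c) * u ^ 2)) :=
  calc |x * exp (-lam * u ^ 2 / 2)| = |x| * exp (-lam * u ^ 2 / 2) := by
        rw [abs_mul, abs_of_pos (exp_pos _)]
    _ ≤ C * u ^ s * exp (c * u ^ 2) * exp (-lam * u ^ 2 / 2) :=
        mul_le_mul_of_nonneg_right hx (exp_pos _).le
    _ = C * (u ^ s * exp (-(lam / 2 - c) * u ^ 2)) := by
        rw [mul_assoc, ← exp_add]; ring_nf

theorem integrableOn_mul_exp_neg_mul_sq_of_abs_le {f : ℝ → ℝ} {C c s lam : ℝ} (hs : -1 < s)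
    (hlam : 2 * c < lam) (hf : AEStronglyMeasurable f (volume.restrict (Ioi 0)))
    (hbound : ∀ u > 0, |f u| ≤ C * u ^ s * exp (c * u ^ 2)) :
    IntegrableOn (fun u => f u * exp (-lam * u ^ 2 / 2)) (Ioi 0) := by
  refine Integrable.mono'
    ((integrableOn_rpow_mul_exp_neg_mul_sq (b := lam / 2 - c) (by linarith) hs).const_mul C)
    (hf.mul (by fun_prop)) ?_
  exact ae_restrict_of_forall_mem measurableSet_Ioi fun u hu =>
    abs_mul_exp_neg_mul_sq_le (hbound u hu)

theorem isBigO_setIntegral_mul_exp_neg_mul_sq {f : ℝ → ℝ} {C c s : ℝ} (hs : -1 < s)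
    (hbound : ∀ u > 0, |f u| ≤ C * u ^ s * exp (c * u ^ 2)) :
    (fun lam => ∫ u in Ioi 0, f u * exp (-lam * u ^ 2 / 2))
      =O[atTop] fun lam => lam ^ (-(s + 1) / 2) := by
  have hC : 0 ≤ C := by
    have h1 := (abs_nonneg _).trans (hbound 1 one_pos)
    rw [one_rpow, mul_one] at h1
    exact nonneg_of_mul_nonneg_left h1 (exp_pos _)
  refine IsBigO.of_bound (C * (4 ^ ((s + 1) / 2) * (1 / 2) * Gamma ((s + 1) / 2))) ?_
  filter_upwards [eventually_gt_atTop 0, eventually_ge_atTop (4 * c)] with lam hlam hc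
  have hle : ∀ u > 0,
      ‖f u * exp (-lam * u ^ 2 / 2)‖ ≤ C * (u ^ s * exp (-(lam / 4) * u ^ 2)) :=
    fun u hu => (abs_mul_exp_neg_mul_sq_le (hbound u hu)).trans <|
      mul_le_mul_of_nonneg_left (mul_le_mul_of_nonneg_left
        (exp_le_exp.2 (by nlinarith [sq_nonneg u])) (rpow_nonneg hu.le _)) hC
  calc ‖∫ u in Ioi 0, f u * exp (-lam * u ^ 2 / 2)‖
      ≤ ∫ u in Ioi 0, C * (u ^ s * exp (-(lam / 4) * u ^ 2)) :=
        norm_integral_le_of_norm_le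
          ((integrableOn_rpow_mul_exp_neg_mul_sq (by positivity) hs).const_mul C)
          (ae_restrict_of_forall_mem measurableSet_Ioi hle)
    _ = C * ((lam / 4) ^ (-(s + 1) / 2) * (1 / 2) * Gamma ((s + 1) / 2)) := by
        rw [integral_const_mul, integral_rpow_mul_exp_neg_mul_sq hs (by positivity)]
    _ = C * (4 ^ ((s + 1) / 2) * (1 / 2) * Gamma ((s + 1) / 2))
          * ‖lam ^ (-(s + 1) / 2)‖ := by
        rw [norm_of_nonneg (rpow_nonneg hlam.le _), div_rpow hlam.le (by norm_num),
          div_eq_mul_inv, ← rpow_neg (by norm_num), show -(-(s + 1) / 2) = (s + 1) / 2 by ring]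
        ring

theorem setIntegral_rpow_mul_sub_sum_mul_pow_mul_exp {f : ℝ → ℝ} {b lam : ℝ} (hb : 0 < b)
    (hlam : 0 < lam) (a : ℕ → ℝ) (N : ℕ)
    (hf : IntegrableOn (fun u => u ^ (b - 1) * f u * exp (-lam * u ^ 2 / 2)) (Ioi 0)) :
    ∫ u in Ioi 0, u ^ (b - 1) * (f u - ∑ k ∈ range N, a k * u ^ k) * exp (-lam * u ^ 2 / 2)
      = (∫ u in Ioi 0, u ^ (b - 1) * f u * exp (-lam * u ^ 2 / 2))
        - (1 / 2) * ∑ k ∈ range N,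
            a k * Gamma ((b + k) / 2) * (lam / 2) ^ (-(b + (k : ℝ)) / 2) := by
  have hs (k : ℕ) : -1 < b - 1 + k := by linarith [k.cast_nonneg (α := ℝ)]
  have hmoment : ∀ k ∈ range N,
      IntegrableOn (fun u => a k * (u ^ (b - 1 + k) * exp (-(lam / 2) * u ^ 2))) (Ioi 0) :=
    fun k _ => (integrableOn_rpow_mul_exp_neg_mul_sq (by positivity) (hs k)).const_mul _
  have hsplit : EqOn
      (fun u => u ^ (b - 1) * (f u - ∑ k ∈ range N, a k * u ^ k) * exp (-lam * u ^ 2 / 2))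
      (fun u => u ^ (b - 1) * f u * exp (-lam * u ^ 2 / 2)
        - ∑ k ∈ range N, a k * (u ^ (b - 1 + k) * exp (-(lam / 2) * u ^ 2))) (Ioi 0) := by
    intro u hu
    simp only [rpow_add hu, rpow_natCast, mul_sub, sub_mul, mul_sum, sum_mul]
    congr 1
    refine sum_congr rfl fun k _ => ?_
    ring_nf
  rw [setIntegral_congr_fun measurableSet_Ioi hsplit,
    integral_sub hf (integrable_finsetSum _ hmoment), integral_finsetSum _ hmoment, mul_sum]
  congr 1
  refine sum_congr rfl fun k _ => ?_
  rw [integral_const_mul, integral_rpow_mul_exp_neg_mul_sq (hs k) (by positivity),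
    show b - 1 + k + 1 = b + k by ring]
  ring

theorem Complex.exists_norm_sub_taylor_le_of_entire {g : ℂ → ℂ} (hg : Differentiable ℂ g)
    (N : ℕ) :
    ∃ C, 0 ≤ C ∧ ∀ z : ℂ, ‖z‖ ≤ 1 →
      ‖g z - ∑ k ∈ range N, (k ! : ℂ)⁻¹ • z ^ k • iteratedDeriv k g 0‖
        ≤ C * ‖z‖ ^ N := by
  have hT (z : ℂ) := by simpa only [sub_zero] using hasSum_taylorSeries_of_entire hg 0 z
  set β : ℕ → ℝ := fun n => ‖((n + N) ! : ℂ)⁻¹ • iteratedDeriv (n + N) g 0‖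
  have hβ : Summable β := by
    simpa [β] using (summable_nat_add_iff N).2 (hT 1).summable.norm
  refine ⟨∑' n, β n, tsum_nonneg fun n => norm_nonneg _, fun z hz => ?_⟩
  rw [← ((hasSum_nat_add_iff' N).2 (hT z)).tsum_eq, ← tsum_mul_right]
  refine tsum_of_norm_bounded (hβ.mul_right _).hasSum fun n => ?_
  calc ‖((n + N) ! : ℂ)⁻¹ • z ^ (n + N) • iteratedDeriv (n + N) g 0‖
        = ‖z‖ ^ n * (β n * ‖z‖ ^ N) := by
        rw [smul_comm, norm_smul, norm_pow, pow_add]; ring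
    _ ≤ β n * ‖z‖ ^ N :=
        mul_le_of_le_one_left (by positivity) (pow_le_one₀ (norm_nonneg _) hz)

lemma re_sum_smul_ofReal_pow (d : ℕ → ℂ) (N : ℕ) (u : ℝ) :
    (∑ k ∈ range N, (k ! : ℂ)⁻¹ • (u : ℂ) ^ k • d k).re
      = ∑ k ∈ range N, (d k).re / k ! * u ^ k := by
  simp only [Complex.re_sum, smul_eq_mul]
  refine sum_congr rfl fun k _ => ?_
  rw [← Complex.ofReal_pow, ← Complex.ofReal_natCast, ← Complex.ofReal_inv, ← mul_assoc,
    ← Complex.ofReal_mul, Complex.re_ofReal_mul]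
  ring

lemma abs_sum_mul_pow_le_of_one_le (a : ℕ → ℝ) (N : ℕ) {u : ℝ} (hu : 1 ≤ u) :
    |∑ k ∈ range N, a k * u ^ k| ≤ (∑ k ∈ range N, |a k|) * u ^ N :=
  calc |∑ k ∈ range N, a k * u ^ k| ≤ ∑ k ∈ range N, |a k| * u ^ k := by
        simpa only [abs_mul, abs_pow, abs_of_nonneg (zero_le_one.trans hu)]
          using abs_sum_le_sum_abs (fun k => a k * u ^ k) (range N)
    _ ≤ ∑ k ∈ range N, |a k| * u ^ N := sum_le_sum fun k hk =>
        mul_le_mul_of_nonneg_left (pow_le_pow_right₀ hu (mem_range.1 hk).le) (abs_nonneg _)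
    _ = (∑ k ∈ range N, |a k|) * u ^ N := (sum_mul ..).symm

theorem exists_abs_re_sub_taylor_le {g : ℂ → ℂ} {M : ℝ} (hg : Differentiable ℂ g)
    (hM : 0 ≤ M) (hbd : ∀ u : ℝ, 0 ≤ u → ‖g u‖ ≤ M * exp (u ^ 2 / 4)) (N : ℕ) :
    ∃ C, ∀ u : ℝ, 0 ≤ u →
      |(g u).re - ∑ k ∈ range N, (iteratedDeriv k g 0).re / k ! * u ^ k|
        ≤ C * u ^ N * exp (u ^ 2 / 4) := by
  obtain ⟨C, hC, hTaylor⟩ := Complex.exists_norm_sub_taylor_le_of_entire hg N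
  set D := ∑ k ∈ range N, |(iteratedDeriv k g 0).re / k !|
  have hD : 0 ≤ D := sum_nonneg fun k _ => abs_nonneg _
  refine ⟨C + M + D, fun u hu => ?_⟩
  have hexp : 1 ≤ exp (u ^ 2 / 4) := one_le_exp (by positivity)
  have huN : 0 ≤ u ^ N := by positivity
  rcases le_total u 1 with hu1 | hu1
  · have hnorm : ‖(u : ℂ)‖ = u := by rw [Complex.norm_real, norm_of_nonneg hu]
    have hTaylor_u := (Complex.abs_re_le_norm _).trans (hTaylor u (hnorm.trans_le hu1))
    rw [Complex.sub_re, re_sum_smul_ofReal_pow, hnorm] at hTaylor_u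
    nlinarith [mul_nonneg (mul_nonneg hC huN) (sub_nonneg.2 hexp),
      mul_nonneg (add_nonneg hM hD) huN]
  · have huN1 : 1 ≤ u ^ N := one_le_pow₀ hu1
    set P := ∑ k ∈ range N, (iteratedDeriv k g 0).re / k ! * u ^ k
    calc |(g u).re - P| ≤ |(g u).re| + |P| := abs_sub _ _
      _ ≤ M * exp (u ^ 2 / 4) + D * u ^ N :=
          add_le_add ((Complex.abs_re_le_norm _).trans (hbd u hu))
            (abs_sum_mul_pow_le_of_one_le _ N hu1)
      _ ≤ (C + M + D) * u ^ N * exp (u ^ 2 / 4) := by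
          nlinarith [mul_nonneg (mul_nonneg hM (sub_nonneg.2 huN1)) (exp_pos (u ^ 2 / 4)).le,
            mul_nonneg (mul_nonneg hD huN) (sub_nonneg.2 hexp),
            mul_nonneg (mul_nonneg hC huN) (exp_pos (u ^ 2 / 4)).le]

theorem coalescence_expansion_general (b M : ℝ) (hb : 0 < b) (hM : 0 < M)
    (g : ℂ → ℂ) (hg : Differentiable ℂ g)
    (hbd : ∀ u : ℝ, 0 ≤ u → ‖g u‖ ≤ M * Real.exp (u ^ 2 / 4)) :
    ∀ N : ℕ, 1 ≤ N →
      (fun lam : ℝ =>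
        (∫ u in Ioi (0 : ℝ), u ^ (b - 1) * (g u).re * Real.exp (-lam * u ^ 2 / 2))
          - (1 / 2) * ∑ k ∈ Finset.range N,
              ((iteratedDeriv k g 0).re / (Nat.factorial k : ℝ)) *
                Real.Gamma ((b + k) / 2) * (lam / 2) ^ (-(b + (k : ℝ)) / 2))
        =O[atTop] fun lam : ℝ => lam ^ (-(b + (N : ℝ)) / 2) := by
  intro N _
  obtain ⟨C, hC⟩ := exists_abs_re_sub_taylor_le hg hM.le hbd N
  have hexp (u : ℝ) : exp (u ^ 2 / 4) = exp (1 / 4 * u ^ 2) := by ring_nf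
  have hmain : ∀ u > (0 : ℝ),
      |u ^ (b - 1) * (g u).re| ≤ M * u ^ (b - 1) * exp (1 / 4 * u ^ 2) := fun u hu => by
    rw [abs_mul, abs_of_pos (rpow_pos_of_pos hu _), ← hexp]
    linarith [mul_le_mul_of_nonneg_left ((Complex.abs_re_le_norm _).trans (hbd u hu.le))
      (rpow_pos_of_pos hu (b - 1)).le]
  have hrem : ∀ u > (0 : ℝ),
      |u ^ (b - 1) * ((g u).re - ∑ k ∈ range N, (iteratedDeriv k g 0).re / k ! * u ^ k)|
        ≤ C * u ^ (b - 1 + N) * exp (1 / 4 * u ^ 2) := fun u hu => by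
    rw [abs_mul, abs_of_pos (rpow_pos_of_pos hu _), ← hexp, rpow_add hu, rpow_natCast]
    linarith [mul_le_mul_of_nonneg_left (hC u hu.le) (rpow_pos_of_pos hu (b - 1)).le]
  have hcont : ContinuousOn (fun u : ℝ => u ^ (b - 1) * (g u).re) (Ioi 0) :=
    (continuousOn_id.rpow_const fun u hu => Or.inl (ne_of_gt hu)).mul
      (Complex.continuous_re.comp (hg.continuous.comp Complex.continuous_ofReal)).continuousOn
  refine (isBigO_setIntegral_mul_exp_neg_mul_sq
    (by linarith [N.cast_nonneg (α := ℝ)]) hrem).congr' ?_ ?_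
  · filter_upwards [eventually_gt_atTop 1] with lam hlam
    exact setIntegral_rpow_mul_sub_sum_mul_pow_mul_exp hb (by linarith) _ N
      (integrableOn_mul_exp_neg_mul_sq_of_abs_le (by linarith) (by linarith)
        (hcont.aestronglyMeasurable measurableSet_Ioi) hmain)
  · exact EventuallyEq.of_eq (by ring_nf)

/-- Expansion at coalescence (equation (4.3), Watson's-lemma type): for `b > 0` and `g` entire,
real-valued on `[0,∞)` with `|g(u)| ≤ M e^{u²/4}` there, for every `N ≥ 1`, as `λ → +∞`,
`∫₀^∞ u^{b-1} g(u) e^{-λu²/2} du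
  = (1/2) Σ_{k=0}^{N-1} (g^{(k)}(0)/k!) Γ((b+k)/2) (λ/2)^{-(b+k)/2} + O(λ^{-(b+N)/2})`. -/
theorem coalescence_expansion (b M : ℝ) (hb : 0 < b) (hM : 0 < M)
    (g : ℂ → ℂ) (hg : Differentiable ℂ g)
    (hreal : ∀ u : ℝ, 0 ≤ u → (g u).im = 0)
    (hbd : ∀ u : ℝ, 0 ≤ u → ‖g u‖ ≤ M * Real.exp (u ^ 2 / 4)) :
    ∀ N : ℕ, 1 ≤ N →
      (fun lam : ℝ =>
        (∫ u in Ioi (0 : ℝ), u ^ (b - 1) * (g u).re * Real.exp (-lam * u ^ 2 / 2))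
          - (1 / 2) * ∑ k ∈ Finset.range N,
              ((iteratedDeriv k g 0).re / (Nat.factorial k : ℝ)) *
                Real.Gamma ((b + k) / 2) * (lam / 2) ^ (-(b + (k : ℝ)) / 2))
        =O[atTop] fun lam : ℝ => lam ^ (-(b + (N : ℝ)) / 2) :=
  coalescence_expansion_general b M hb hM g hg hbd
end

section
/- Let b>0, α∈ℝ, λ>1, m∈ℕ and M>0, and let G:[0,∞)→ℝ be continuously differentiable with |G(u)|≤M(1+u)^m and |G′(u)|≤M(1+u)^m for all u≥0. Then λ·∫₀^∞ u^{b}(u−α)·G(u)·e^{−λ(u−α)²/2} du = ∫₀^∞ u^{b−1}·(b·G(u)+u·G′(u))·e^{−λ(u−α)²/2} du. (This is the integration-by-parts step underlying the Bleistein recursion g_{k+1}=bG_k+uG_k′.) -/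
/-!
Put `f(u) = u^b G(u) e^{-λ(u-α)²/2}`. On `(0, ∞)` its derivative is the right-hand integrand
minus `λ` times the left-hand one. Both integrands are absolutely integrable: polynomial
growth is absorbed by the Gaussian, and `u^{b-1}` is integrable at `0` since `b > 0`. Hence
the fundamental theorem of calculus on `(0, ∞)` gives the identity, because `f(0) = 0` (as
`b > 0`) and `f(u) → 0` as `u → ∞`.
-/

open MeasureTheory Real Set Filter Topology

namespace Bleistein

variable {lam : ℝ} (α : ℝ)

lemma abs_sub_mul_le {M x u : ℝ} {m : ℕ} (hu : 0 ≤ u) (hx : |x| ≤ M * (1 + u) ^ m) :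
    |(u - α) * x| ≤ M * (1 + |α|) * (1 + u) ^ (m + 1) := by
  have hMu : 0 ≤ M * (1 + u) ^ m := (abs_nonneg x).trans hx
  have hsub : |u - α| ≤ (1 + |α|) * (1 + u) := by
    refine (abs_sub u α).trans ?_
    rw [abs_of_nonneg hu]
    nlinarith [abs_nonneg α]
  calc |(u - α) * x| ≤ (1 + |α|) * (1 + u) * (M * (1 + u) ^ m) := by
        rw [abs_mul]
        exact mul_le_mul hsub hx (abs_nonneg x) (by positivity)
    _ = M * (1 + |α|) * (1 + u) ^ (m + 1) := by ring

lemma abs_mul_add_mul_le {b M x y u : ℝ} {m : ℕ} (hb : 0 ≤ b) (hu : 0 ≤ u)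
    (hx : |x| ≤ M * (1 + u) ^ m) (hy : |y| ≤ M * (1 + u) ^ m) :
    |b * x + u * y| ≤ M * (b + 1) * (1 + u) ^ (m + 1) := by
  have hMu : 0 ≤ M * (1 + u) ^ m := (abs_nonneg x).trans hx
  calc |b * x + u * y| ≤ b * |x| + u * |y| := by
        refine (abs_add_le _ _).trans ?_
        rw [abs_mul, abs_mul, abs_of_nonneg hb, abs_of_nonneg hu]
    _ ≤ b * (M * (1 + u) ^ m) + u * (M * (1 + u) ^ m) := by gcongr
    _ ≤ M * (b + 1) * (1 + u) ^ (m + 1) := by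
        rw [pow_succ]
        nlinarith [mul_nonneg hMu hu, mul_nonneg hMu hb]

/-- The constant comes from `(u - α)² ≥ u²/2 - α²` and `k u ≤ λ u²/8 + 2k²/λ`. -/
lemma one_add_pow_mul_gaussian_le (hlam : 0 < lam) (k : ℕ) {u : ℝ} (hu : 0 ≤ u) :
    (1 + u) ^ k * exp (-lam * (u - α) ^ 2 / 2) ≤
      exp (lam * α ^ 2 / 2 + 2 * (k : ℝ) ^ 2 / lam) * exp (-(lam / 8) * u ^ 2) := by
  have hpow : (1 + u) ^ k ≤ exp (k * u) := by
    calc (1 + u) ^ k ≤ exp u ^ k := by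
          gcongr
          linarith [add_one_le_exp u]
      _ = exp (k * u) := (exp_nat_mul u k).symm
  calc (1 + u) ^ k * exp (-lam * (u - α) ^ 2 / 2)
      ≤ exp (k * u) * exp (-lam * (u - α) ^ 2 / 2) := by gcongr
    _ ≤ _ := by
      rw [← exp_add, ← exp_add, exp_le_exp, ← mul_le_mul_iff_of_pos_right hlam]
      have hk : 2 * (k : ℝ) ^ 2 / lam * lam = 2 * k ^ 2 := div_mul_cancel₀ _ hlam.ne'
      nlinarith [sq_nonneg (lam * u - 4 * k), mul_nonneg (mul_pos hlam hlam).le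
        (sq_nonneg (u - 2 * α))]

lemma abs_rpow_mul_mul_gaussian_le (hlam : 0 < lam) (s : ℝ) {φ : ℝ → ℝ} {K : ℝ} {k : ℕ}
    {u : ℝ} (hu : 0 ≤ u) (hφ : |φ u| ≤ K * (1 + u) ^ k) :
    |u ^ s * φ u * exp (-lam * (u - α) ^ 2 / 2)| ≤
      K * exp (lam * α ^ 2 / 2 + 2 * (k : ℝ) ^ 2 / lam) *
        (u ^ s * exp (-(lam / 8) * u ^ 2)) := by
  have hK : 0 ≤ K :=
    nonneg_of_mul_nonneg_left ((abs_nonneg _).trans hφ) (by positivity)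
  have hus : 0 ≤ u ^ s := rpow_nonneg hu s
  rw [abs_mul, abs_mul, abs_of_nonneg hus, abs_of_pos (exp_pos _)]
  calc u ^ s * |φ u| * exp (-lam * (u - α) ^ 2 / 2)
      ≤ u ^ s * (K * (1 + u) ^ k) * exp (-lam * (u - α) ^ 2 / 2) := by gcongr
    _ = K * u ^ s * ((1 + u) ^ k * exp (-lam * (u - α) ^ 2 / 2)) := by ring
    _ ≤ K * u ^ s * (exp (lam * α ^ 2 / 2 + 2 * (k : ℝ) ^ 2 / lam) *
          exp (-(lam / 8) * u ^ 2)) :=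
      mul_le_mul_of_nonneg_left (one_add_pow_mul_gaussian_le α hlam k hu) (mul_nonneg hK hus)
    _ = _ := by ring

lemma integrableOn_rpow_mul_mul_gaussian (hlam : 0 < lam) {s : ℝ} (hs : -1 < s)
    {φ : ℝ → ℝ} {K : ℝ} {k : ℕ} (hφ : ContinuousOn φ (Ioi 0))
    (hφbd : ∀ u, 0 < u → |φ u| ≤ K * (1 + u) ^ k) :
    IntegrableOn (fun u => u ^ s * φ u * exp (-lam * (u - α) ^ 2 / 2)) (Ioi 0) := by
  refine Integrable.mono'
    ((integrableOn_rpow_mul_exp_neg_mul_sq (b := lam / 8) (by positivity) hs).const_mul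
      (K * exp (lam * α ^ 2 / 2 + 2 * (k : ℝ) ^ 2 / lam))) ?_ ?_
  · refine ContinuousOn.aestronglyMeasurable (ContinuousOn.mul (ContinuousOn.mul ?_ hφ)
      (by fun_prop)) measurableSet_Ioi
    exact fun u hu => (continuousAt_rpow_const u s (Or.inl (ne_of_gt hu))).continuousWithinAt
  · filter_upwards [ae_restrict_mem measurableSet_Ioi] with u hu
    rw [norm_eq_abs]
    exact abs_rpow_mul_mul_gaussian_le α hlam s hu.le (hφbd u hu)

lemma tendsto_rpow_mul_mul_gaussian_atTop (hlam : 0 < lam) (s : ℝ) {φ : ℝ → ℝ} {K : ℝ}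
    {k : ℕ} (hφbd : ∀ u, 0 < u → |φ u| ≤ K * (1 + u) ^ k) :
    Tendsto (fun u => u ^ s * φ u * exp (-lam * (u - α) ^ 2 / 2)) atTop (𝓝 0) := by
  have hdecay : Tendsto (fun u : ℝ => u ^ s * exp (-(lam / 8) * u ^ 2)) atTop (𝓝 0) :=
    (rpow_mul_exp_neg_mul_sq_isLittleO_exp_neg (by positivity) s).tendsto_zero_of_tendsto
      (tendsto_exp_atBot.comp (tendsto_id.const_mul_atTop_of_neg (by norm_num)))
  have hbound := hdecay.const_mul (K * exp (lam * α ^ 2 / 2 + 2 * (k : ℝ) ^ 2 / lam))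
  rw [mul_zero] at hbound
  refine squeeze_zero_norm' ?_ hbound
  filter_upwards [eventually_gt_atTop 0] with u hu
  rw [norm_eq_abs]
  exact abs_rpow_mul_mul_gaussian_le α hlam s hu.le (hφbd u hu)

lemma hasDerivAt_rpow_mul_mul_gaussian (b : ℝ) {G : ℝ → ℝ} {G' u : ℝ} (hu : 0 < u)
    (hG : HasDerivAt G G' u) :
    HasDerivAt (fun u => u ^ b * G u * exp (-lam * (u - α) ^ 2 / 2))
      (u ^ (b - 1) * (b * G u + u * G') * exp (-lam * (u - α) ^ 2 / 2) -
        lam * (u ^ b * (u - α) * G u * exp (-lam * (u - α) ^ 2 / 2))) u := by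
  have hexp : HasDerivAt (fun u => exp (-lam * (u - α) ^ 2 / 2))
      (exp (-lam * (u - α) ^ 2 / 2) * (-lam * (u - α))) u := by
    refine HasDerivAt.exp ?_
    refine (((((hasDerivAt_id u).sub_const α).fun_pow 2).const_mul (-lam)).div_const 2
      ).congr_deriv ?_
    simp only [id, Nat.cast_ofNat]
    ring
  have hub : u ^ b = u ^ (b - 1) * u := by
    rw [← rpow_add_one hu.ne', sub_add_cancel]
  refine (((hasDerivAt_rpow_const (Or.inl hu.ne')).fun_mul hG).fun_mul hexp).congr_deriv ?_
  rw [hub]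
  ring

end Bleistein

open Bleistein

theorem bleistein_integration_by_parts_general (b α lam : ℝ) (hb : 0 < b) (hlam : 1 < lam)
    (m : ℕ) (M : ℝ) (G : ℝ → ℝ) (hG : ContDiffOn ℝ 1 G (Ici 0))
    (hGbd : ∀ u : ℝ, 0 ≤ u → |G u| ≤ M * (1 + u) ^ m)
    (hG'bd : ∀ u : ℝ, 0 ≤ u → |derivWithin G (Ici 0) u| ≤ M * (1 + u) ^ m) :
    lam * ∫ u in Ioi (0 : ℝ), u ^ b * (u - α) * G u * Real.exp (-lam * (u - α) ^ 2 / 2)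
      = ∫ u in Ioi (0 : ℝ),
          u ^ (b - 1) * (b * G u + u * derivWithin G (Ici 0) u) *
            Real.exp (-lam * (u - α) ^ 2 / 2) := by
  have hlam0 : 0 < lam := one_pos.trans hlam
  have hGcont : ContinuousOn G (Ici 0) := hG.continuousOn
  have hG'cont : ContinuousOn (derivWithin G (Ici 0)) (Ici 0) :=
    hG.continuousOn_derivWithin (uniqueDiffOn_Ici 0) le_rfl
  have hGderiv (u : ℝ) (hu : 0 < u) : HasDerivAt G (derivWithin G (Ici 0) u) u :=
    (hG.differentiableOn one_ne_zero u hu.le).hasDerivWithinAt.hasDerivAt (Ici_mem_nhds hu)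
  have hrhs : IntegrableOn (fun u => u ^ (b - 1) * (b * G u + u * derivWithin G (Ici 0) u) *
      exp (-lam * (u - α) ^ 2 / 2)) (Ioi 0) :=
    integrableOn_rpow_mul_mul_gaussian α hlam0 (by linarith)
      (((continuousOn_const.mul hGcont).add (continuousOn_id.mul hG'cont)).mono
        Ioi_subset_Ici_self)
      (fun u hu => abs_mul_add_mul_le hb.le hu.le (hGbd u hu.le) (hG'bd u hu.le))
  have hlhs : IntegrableOn (fun u => u ^ b * (u - α) * G u * exp (-lam * (u - α) ^ 2 / 2))
      (Ioi 0) :=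
    (integrableOn_rpow_mul_mul_gaussian α hlam0 (s := b) (φ := fun u => (u - α) * G u)
      (by linarith)
      (((continuousOn_id.sub continuousOn_const).mul hGcont).mono Ioi_subset_Ici_self)
      (fun u hu => abs_sub_mul_le α hu.le (hGbd u hu.le))).congr_fun
      (fun u _ => by ring) measurableSet_Ioi
  have hcont : ContinuousWithinAt (fun u => u ^ b * G u * exp (-lam * (u - α) ^ 2 / 2))
      (Ici 0) 0 :=
    ((continuousAt_rpow_const 0 b (Or.inr hb.le)).continuousWithinAt.mul
      (hGcont 0 self_mem_Ici)).mul (by fun_prop : Continuous _).continuousWithinAt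
  have hFTC := integral_Ioi_of_hasDerivAt_of_tendsto hcont
    (fun u hu => hasDerivAt_rpow_mul_mul_gaussian α b hu (hGderiv u hu))
    (hrhs.sub (hlhs.const_mul lam))
    (tendsto_rpow_mul_mul_gaussian_atTop α hlam0 b (fun u hu => hGbd u hu.le))
  rw [integral_sub hrhs (hlhs.const_mul lam), integral_const_mul] at hFTC
  simp only [zero_rpow hb.ne', zero_mul, sub_zero] at hFTC
  linarith

/-- The integration-by-parts step underlying the Bleistein recursion: for `b > 0`, `λ > 1`,
and `G` continuously differentiable on `[0,∞)` of polynomial growth (together with its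
derivative),
`λ ∫₀^∞ u^b (u-α) G(u) e^{-λ(u-α)²/2} du = ∫₀^∞ u^{b-1} (b G(u) + u G'(u)) e^{-λ(u-α)²/2} du`. -/
theorem bleistein_integration_by_parts (b α lam : ℝ) (hb : 0 < b) (hlam : 1 < lam)
    (m : ℕ) (M : ℝ) (hM : 0 < M) (G : ℝ → ℝ) (hG : ContDiffOn ℝ 1 G (Ici 0))
    (hGbd : ∀ u : ℝ, 0 ≤ u → |G u| ≤ M * (1 + u) ^ m)
    (hG'bd : ∀ u : ℝ, 0 ≤ u → |derivWithin G (Ici 0) u| ≤ M * (1 + u) ^ m) :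
    lam * ∫ u in Ioi (0 : ℝ), u ^ b * (u - α) * G u * Real.exp (-lam * (u - α) ^ 2 / 2)
      = ∫ u in Ioi (0 : ℝ),
          u ^ (b - 1) * (b * G u + u * derivWithin G (Ici 0) u) *
            Real.exp (-lam * (u - α) ^ 2 / 2) :=
  bleistein_integration_by_parts_general b α lam hb hlam m M G hG hGbd hG'bd
end

section
/- Let b>0 and for χ∈ℝ and integer k≥0 set S_k(χ)=(1/Γ(b))·∫₀^∞ τ^{b−1}(τ−χ)^k e^{−(τ−χ)²/2} dτ. Then for every integer k≥2 and every χ∈ℝ, S_k(χ) = −χ·S_{k−1}(χ) + (b+k−2)·S_{k−2}(χ) + χ·(k−2)·S_{k−3}(χ), where for k=2 the last term is interpreted as 0. -/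
/-!
Write `y = τ - χ` and `E = e^{-y²/2}`, so that `E' = -y E`. Integrating the derivative of
`τ^b y^m E` over `(0, ∞)` gives `0`, because the boundary term vanishes at `0` (as `b > 0`) and at
`∞` (Gaussian decay). Splitting `τ^b = τ^{b-1} (y + χ)` in the derivative
`b τ^{b-1} y^m E + m τ^b y^{m-1} E - τ^b y^{m+1} E` expresses it through the integrands of
`S_{m+2}, S_{m+1}, S_m, S_{m-1}`, which is the recurrence with `k = m + 2`. For `m = 0` the
truncated index `m - 1 = 0` is harmless, as that term carries the coefficient `m`.
-/

open MeasureTheory Real Set Filter Topology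

noncomputable def S (b : ℝ) (k : ℕ) (χ : ℝ) : ℝ :=
  (1 / Real.Gamma b) *
    ∫ τ in Set.Ioi (0 : ℝ), τ ^ (b - 1) * (τ - χ) ^ k * Real.exp (-(τ - χ) ^ 2 / 2)

noncomputable def gaussIntegrand (c χ : ℝ) (j : ℕ) (τ : ℝ) : ℝ :=
  τ ^ c * (τ - χ) ^ j * exp (-(τ - χ) ^ 2 / 2)

lemma abs_sub_pow_mul_exp_le (j : ℕ) (χ τ : ℝ) :
    |τ - χ| ^ j * exp (-(τ - χ) ^ 2 / 2)
      ≤ j.factorial * exp (1 + χ ^ 2 / 4) * exp (-(1 / 8) * τ ^ 2) := by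
  have hpow : |τ - χ| ^ j ≤ j.factorial * exp |τ - χ| := by
    have := pow_div_factorial_le_exp _ (abs_nonneg (τ - χ)) j
    rwa [div_le_iff₀' (by positivity)] at this
  -- `|y| ≤ y²/4 + 1`, and `-y²/4 ≤ χ²/4 - τ²/8` since the difference is `(τ - 2χ)²/8`
  have hexp : |τ - χ| - (τ - χ) ^ 2 / 2 ≤ 1 + χ ^ 2 / 4 + -(1 / 8) * τ ^ 2 := by
    nlinarith [sq_abs (τ - χ), sq_nonneg (|τ - χ| - 2), sq_nonneg (τ - 2 * χ)]
  calc |τ - χ| ^ j * exp (-(τ - χ) ^ 2 / 2)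
      ≤ j.factorial * exp |τ - χ| * exp (-(τ - χ) ^ 2 / 2) := by gcongr
    _ = j.factorial * exp (|τ - χ| - (τ - χ) ^ 2 / 2) := by
        rw [mul_assoc, ← exp_add]; ring_nf
    _ ≤ j.factorial * exp (1 + χ ^ 2 / 4 + -(1 / 8) * τ ^ 2) := by gcongr
    _ = j.factorial * exp (1 + χ ^ 2 / 4) * exp (-(1 / 8) * τ ^ 2) := by
        rw [exp_add]; ring

lemma norm_gaussIntegrand_le (c χ : ℝ) (j : ℕ) {τ : ℝ} (hτ : 0 ≤ τ) :
    ‖gaussIntegrand c χ j τ‖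
      ≤ j.factorial * exp (1 + χ ^ 2 / 4) * (τ ^ c * exp (-(1 / 8) * τ ^ 2)) := by
  have hτc : 0 ≤ τ ^ c := rpow_nonneg hτ c
  calc ‖gaussIntegrand c χ j τ‖ = τ ^ c * (|τ - χ| ^ j * exp (-(τ - χ) ^ 2 / 2)) := by
        rw [gaussIntegrand, norm_mul, norm_mul, norm_pow, Real.norm_of_nonneg hτc,
          Real.norm_of_nonneg (exp_pos _).le, Real.norm_eq_abs, mul_assoc]
    _ ≤ τ ^ c * (j.factorial * exp (1 + χ ^ 2 / 4) * exp (-(1 / 8) * τ ^ 2)) :=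
        mul_le_mul_of_nonneg_left (abs_sub_pow_mul_exp_le j χ τ) hτc
    _ = _ := by ring

lemma continuousAt_gaussIntegrand {c τ : ℝ} (χ : ℝ) (j : ℕ) (h : τ ≠ 0 ∨ 0 ≤ c) :
    ContinuousAt (gaussIntegrand c χ j) τ :=
  ((continuousAt_rpow_const τ c h).mul (by fun_prop)).mul (by fun_prop)

lemma integrableOn_gaussIntegrand {c : ℝ} (hc : -1 < c) (χ : ℝ) (j : ℕ) :
    IntegrableOn (gaussIntegrand c χ j) (Ioi 0) := by
  have hdom := (integrableOn_rpow_mul_exp_neg_mul_sq (by norm_num : (0 : ℝ) < 1 / 8) hc).const_mul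
    (j.factorial * exp (1 + χ ^ 2 / 4))
  have hcont : ContinuousOn (gaussIntegrand c χ j) (Ioi 0) := fun τ hτ =>
    (continuousAt_gaussIntegrand χ j (Or.inl (ne_of_gt hτ))).continuousWithinAt
  refine hdom.mono' (hcont.aestronglyMeasurable measurableSet_Ioi) ?_
  filter_upwards [self_mem_ae_restrict measurableSet_Ioi] with τ hτ
  exact norm_gaussIntegrand_le c χ j (le_of_lt hτ)

lemma tendsto_gaussIntegrand_atTop (c χ : ℝ) (j : ℕ) :
    Tendsto (gaussIntegrand c χ j) atTop (𝓝 0) := by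
  have hdecay : Tendsto (fun τ : ℝ => τ ^ c * exp (-(1 / 8) * τ ^ 2)) atTop (𝓝 0) :=
    (rpow_mul_exp_neg_mul_sq_isLittleO_exp_neg (by norm_num) c).tendsto_zero_of_tendsto
      (tendsto_exp_atBot.comp (tendsto_id.const_mul_atTop_of_neg (by norm_num)))
  refine squeeze_zero_norm' ?_
    (by simpa only [mul_zero] using hdecay.const_mul (j.factorial * exp (1 + χ ^ 2 / 4)))
  filter_upwards [eventually_ge_atTop 0] with τ hτ
  exact norm_gaussIntegrand_le c χ j hτ

lemma hasDerivAt_gaussIntegrand (b χ : ℝ) (m : ℕ) {τ : ℝ} (hτ : 0 < τ) :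
    HasDerivAt (gaussIntegrand b χ m)
      (-gaussIntegrand (b - 1) χ (m + 2) τ - χ * gaussIntegrand (b - 1) χ (m + 1) τ
        + (b + m) * gaussIntegrand (b - 1) χ m τ + χ * m * gaussIntegrand (b - 1) χ (m - 1) τ)
      τ := by
  have hrpow : HasDerivAt (fun t : ℝ => t ^ b) (b * τ ^ (b - 1)) τ :=
    hasDerivAt_rpow_const (Or.inl hτ.ne')
  have hpow : HasDerivAt (fun t : ℝ => (t - χ) ^ m) (m * (τ - χ) ^ (m - 1)) τ := by
    simpa using ((hasDerivAt_id' τ).sub_const χ).fun_pow m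
  have hgauss : HasDerivAt (fun t : ℝ => exp (-(t - χ) ^ 2 / 2))
      (exp (-(τ - χ) ^ 2 / 2) * (-(τ - χ))) τ :=
    ((((hasDerivAt_id' τ).sub_const χ).fun_pow 2).fun_neg.div_const 2).exp.congr_deriv
      (by simp only [Nat.cast_ofNat]; ring)
  have hsplit : τ ^ b = τ ^ (b - 1) * ((τ - χ) + χ) := by
    rw [sub_add_cancel, ← rpow_add_one hτ.ne', sub_add_cancel]
  have hm : (m : ℝ) * (τ - χ) ^ (m - 1) * (τ - χ) = m * (τ - χ) ^ m := by
    cases m with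
    | zero => simp
    | succ n => rw [Nat.add_sub_cancel, pow_succ]; ring
  refine ((hrpow.fun_mul hpow).fun_mul hgauss).congr_deriv ?_
  simp only [gaussIntegrand, hsplit]
  linear_combination (τ ^ (b - 1) * exp (-(τ - χ) ^ 2 / 2)) * hm

lemma integral_gaussIntegrand_add_two {b : ℝ} (hb : 0 < b) (χ : ℝ) (m : ℕ) :
    ∫ τ in Ioi 0, gaussIntegrand (b - 1) χ (m + 2) τ
      = -χ * (∫ τ in Ioi 0, gaussIntegrand (b - 1) χ (m + 1) τ)
        + (b + m) * (∫ τ in Ioi 0, gaussIntegrand (b - 1) χ m τ)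
        + χ * m * ∫ τ in Ioi 0, gaussIntegrand (b - 1) χ (m - 1) τ := by
  have hint (j : ℕ) : Integrable (gaussIntegrand (b - 1) χ j) (volume.restrict (Ioi 0)) :=
    integrableOn_gaussIntegrand (by linarith) χ j
  have hcont : ContinuousWithinAt (gaussIntegrand b χ m) (Ici 0) 0 :=
    (continuousAt_gaussIntegrand χ m (Or.inr hb.le)).continuousWithinAt
  have hzero : gaussIntegrand b χ m 0 = 0 := by simp [gaussIntegrand, zero_rpow hb.ne']
  have hFTC := integral_Ioi_of_hasDerivAt_of_tendsto hcont
    (fun τ hτ => hasDerivAt_gaussIntegrand b χ m hτ)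
    (by rw [IntegrableOn]; fun_prop)
    (tendsto_gaussIntegrand_atTop b χ m)
  rw [hzero, sub_zero, integral_add, integral_add, integral_sub, integral_neg, integral_const_mul,
    integral_const_mul, integral_const_mul] at hFTC
  · linear_combination -hFTC
  all_goals fun_prop

/-- The recurrence `S_k(χ) = -χ S_{k-1}(χ) + (b+k-2) S_{k-2}(χ) + χ (k-2) S_{k-3}(χ)` for `k ≥ 2`
(for `k = 2` the last term vanishes since its coefficient is `0`). -/
theorem S_recurrence (b : ℝ) (hb : 0 < b) (k : ℕ) (hk : 2 ≤ k) (χ : ℝ) :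
    S b k χ = -χ * S b (k - 1) χ + (b + k - 2) * S b (k - 2) χ
      + χ * ((k : ℝ) - 2) * S b (k - 3) χ := by
  obtain ⟨m, rfl⟩ : ∃ m, k = m + 2 := ⟨k - 2, by omega⟩
  have hS (j : ℕ) : S b j χ = 1 / Gamma b * ∫ τ in Ioi 0, gaussIntegrand (b - 1) χ j τ := rfl
  rw [hS, hS, hS, hS, show m + 2 - 1 = m + 1 from rfl, Nat.add_sub_cancel,
    show m + 2 - 3 = m - 1 from rfl, integral_gaussIntegrand_add_two hb]
  push_cast
  ring
end

section
/- Let b>0. Then for all χ∈ℝ: S₂(χ) = b·S₀(χ) − χ·S₁(χ); S₃(χ) = −(b−1)·χ·S₀(χ) + (b+1+χ²)·S₁(χ); and S₄(χ) = (b(b+2)+(b−1)χ²)·S₀(χ) − ((2b+1)χ+χ³)·S₁(χ). (These are the entries k=2,3,4 of Table 1 with μ=b−1.) -/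
open MeasureTheory Real

/-!
Differentiating `τ ^ b (τ - χ) ^ k e^{-(τ-χ)²/2}`, which vanishes at `0` (as `b > 0`) and at `∞`,
and writing `τ = (τ - χ) + χ`, the fundamental theorem of calculus on `(0, ∞)` gives the
three-term recurrence `S_{k+2} = (b + k) S_k + k χ S_{k-1} - χ S_{k+1}`.
Its cases `k = 0, 1, 2` are the three identities.
-/

open Set Filter Topology

namespace S

noncomputable def integrand (s χ : ℝ) (k : ℕ) (τ : ℝ) : ℝ :=
  τ ^ s * (τ - χ) ^ k * exp (-(τ - χ) ^ 2 / 2)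

theorem abs_integrand_le (s χ : ℝ) (k : ℕ) {τ : ℝ} (hτ : 0 < τ) :
    |integrand s χ k τ| ≤ 2 ^ k * exp (χ ^ 2) *
      (|χ| ^ k * (τ ^ s * exp (-(1 / 4) * τ ^ 2)) + τ ^ (s + k) * exp (-(1 / 4) * τ ^ 2)) := by
  have hpow : |τ - χ| ^ k ≤ 2 ^ k * (|χ| ^ k + τ ^ k) := calc
    |τ - χ| ^ k ≤ (|χ| + τ) ^ k := by
      gcongr
      rw [abs_le]
      constructor <;> linarith [le_abs_self χ, neg_abs_le χ]
    _ ≤ 2 ^ (k - 1) * (|χ| ^ k + τ ^ k) := add_pow_le (abs_nonneg χ) hτ.le k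
    _ ≤ 2 ^ k * (|χ| ^ k + τ ^ k) := by gcongr <;> norm_num
  have hexp : exp (-(τ - χ) ^ 2 / 2) ≤ exp (χ ^ 2) * exp (-(1 / 4) * τ ^ 2) := by
    rw [← exp_add, exp_le_exp]
    nlinarith [sq_nonneg (τ - 2 * χ)]
  rw [integrand, abs_mul, abs_mul, abs_of_pos (rpow_pos_of_pos hτ s), abs_of_pos (exp_pos _),
    abs_pow, rpow_add hτ, rpow_natCast]
  calc τ ^ s * |τ - χ| ^ k * exp (-(τ - χ) ^ 2 / 2)
      ≤ τ ^ s * (2 ^ k * (|χ| ^ k + τ ^ k)) * (exp (χ ^ 2) * exp (-(1 / 4) * τ ^ 2)) := by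
        gcongr
    _ = _ := by ring

theorem continuousOn_integrand (s χ : ℝ) (k : ℕ) : ContinuousOn (integrand s χ k) (Ioi 0) := by
  refine ContinuousOn.mul (.mul ?_ (by fun_prop)) (by fun_prop)
  exact fun τ hτ => (continuousAt_rpow_const τ s (.inl (ne_of_gt hτ))).continuousWithinAt

theorem integrableOn_integrand {s : ℝ} (hs : -1 < s) (χ : ℝ) (k : ℕ) :
    IntegrableOn (integrand s χ k) (Ioi 0) := by
  have hq : (0 : ℝ) < 1 / 4 := by norm_num
  have hdom : IntegrableOn (fun τ => 2 ^ k * exp (χ ^ 2) *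
      (|χ| ^ k * (τ ^ s * exp (-(1 / 4) * τ ^ 2)) + τ ^ (s + k) * exp (-(1 / 4) * τ ^ 2)))
      (Ioi 0) :=
    (((integrableOn_rpow_mul_exp_neg_mul_sq hq hs).const_mul _).add
      (integrableOn_rpow_mul_exp_neg_mul_sq hq (by linarith [k.cast_nonneg (α := ℝ)]))).const_mul _
  refine hdom.mono' ((continuousOn_integrand s χ k).aestronglyMeasurable measurableSet_Ioi) ?_
  exact (ae_restrict_iff' measurableSet_Ioi).2 (.of_forall fun τ hτ => abs_integrand_le s χ k hτ)

theorem tendsto_integrand_atTop (s χ : ℝ) (k : ℕ) :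
    Tendsto (integrand s χ k) atTop (𝓝 0) := by
  have hq : (0 : ℝ) < 1 / 4 := by norm_num
  have hgauss (r : ℝ) : Tendsto (fun τ : ℝ => τ ^ r * exp (-(1 / 4) * τ ^ 2)) atTop (𝓝 0) :=
    (rpow_mul_exp_neg_mul_sq_isLittleO_exp_neg hq r).tendsto_zero_of_tendsto <|
      tendsto_exp_atBot.comp <| tendsto_id.const_mul_atTop_of_neg (by norm_num)
  have hdom := (((hgauss s).const_mul (|χ| ^ k)).add (hgauss (s + k))).const_mul
    ((2 : ℝ) ^ k * exp (χ ^ 2))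
  rw [mul_zero, zero_add, mul_zero] at hdom
  refine squeeze_zero_norm' ?_ hdom
  filter_upwards [eventually_gt_atTop 0] with τ hτ using abs_integrand_le s χ k hτ

theorem integrand_zero {s : ℝ} (hs : s ≠ 0) (χ : ℝ) (k : ℕ) : integrand s χ k 0 = 0 := by
  simp [integrand, zero_rpow hs]

theorem continuous_integrand {s : ℝ} (hs : 0 ≤ s) (χ : ℝ) (k : ℕ) :
    Continuous (integrand s χ k) :=
  ((continuous_id.rpow_const fun _ => .inr hs).mul (by fun_prop)).mul (by fun_prop)

theorem hasDerivAt_integrand (s χ : ℝ) (k : ℕ) {τ : ℝ} (hτ : 0 < τ) :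
    HasDerivAt (integrand (s + 1) χ k)
      ((s + 1 + k) * integrand s χ k τ + k * χ * integrand s χ (k - 1) τ
        - χ * integrand s χ (k + 1) τ - integrand s χ (k + 2) τ) τ := by
  have hrpow : HasDerivAt (fun τ : ℝ => τ ^ (s + 1)) ((s + 1) * τ ^ s) τ := by
    simpa using hasDerivAt_rpow_const (p := s + 1) (.inl hτ.ne')
  have hpow : HasDerivAt (fun τ : ℝ => (τ - χ) ^ k) (k * (τ - χ) ^ (k - 1)) τ := by
    simpa using ((hasDerivAt_id τ).sub_const χ).fun_pow k
  have hexp : HasDerivAt (fun τ : ℝ => exp (-(τ - χ) ^ 2 / 2))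
      (exp (-(τ - χ) ^ 2 / 2) * -(τ - χ)) τ := by
    refine ((((hasDerivAt_id τ).sub_const χ).fun_pow 2).fun_neg.div_const 2).exp.congr_deriv ?_
    simp only [id, Nat.cast_ofNat]
    ring
  -- `k (τ - χ)^(k-1) (τ - χ) = k (τ - χ)^k` also for `k = 0`, where the coefficient vanishes
  have hk : (k : ℝ) * (τ - χ) ^ (k - 1) * (τ - χ) = k * (τ - χ) ^ k := by
    cases k <;> simp [pow_succ, mul_assoc]
  refine ((hrpow.fun_mul hpow).fun_mul hexp).congr_deriv ?_
  simp only [integrand, rpow_add_one hτ.ne']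
  linear_combination (τ ^ s * exp (-(τ - χ) ^ 2 / 2)) * hk

theorem integral_integrand_add_two {s : ℝ} (hs : -1 < s) (χ : ℝ) (k : ℕ) :
    ∫ τ in Ioi 0, integrand s χ (k + 2) τ =
      (s + 1 + k) * (∫ τ in Ioi 0, integrand s χ k τ)
        + k * χ * (∫ τ in Ioi 0, integrand s χ (k - 1) τ)
        - χ * ∫ τ in Ioi 0, integrand s χ (k + 1) τ := by
  have hint (j : ℕ) : Integrable (integrand s χ j) (volume.restrict (Ioi 0)) :=
    integrableOn_integrand hs χ j
  have := hint k; have := hint (k - 1); have := hint (k + 1); have := hint (k + 2)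
  have hFTC := integral_Ioi_of_hasDerivAt_of_tendsto
    (continuous_integrand (by linarith) χ k).continuousWithinAt
    (fun τ hτ => hasDerivAt_integrand s χ k hτ)
    (by unfold IntegrableOn; fun_prop)
    (tendsto_integrand_atTop _ χ k)
  rw [integrand_zero (by linarith) χ k, integral_sub, integral_sub, integral_add,
    integral_const_mul, integral_const_mul, integral_const_mul] at hFTC
  · linarith
  all_goals fun_prop

end S

theorem S_eq_integral_integrand (b : ℝ) (k : ℕ) (χ : ℝ) :
    S b k χ = (1 / Gamma b) * ∫ τ in Ioi 0, S.integrand (b - 1) χ k τ :=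
  rfl

theorem S_add_two {b : ℝ} (hb : 0 < b) (χ : ℝ) (k : ℕ) :
    S b (k + 2) χ = (b + k) * S b k χ + k * χ * S b (k - 1) χ - χ * S b (k + 1) χ := by
  simp only [S_eq_integral_integrand,
    S.integral_integrand_add_two (s := b - 1) (by linarith) χ k, sub_add_cancel]
  ring

/-- The entries `k = 2, 3, 4` of Table 1 (with `μ = b - 1`):
`S₂ = b S₀ - χ S₁`, `S₃ = -(b-1)χ S₀ + (b+1+χ²) S₁`,
`S₄ = (b(b+2) + (b-1)χ²) S₀ - ((2b+1)χ + χ³) S₁`. -/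
theorem S_two_three_four (b : ℝ) (hb : 0 < b) (χ : ℝ) :
    S b 2 χ = b * S b 0 χ - χ * S b 1 χ ∧
    S b 3 χ = -(b - 1) * χ * S b 0 χ + (b + 1 + χ ^ 2) * S b 1 χ ∧
    S b 4 χ = (b * (b + 2) + (b - 1) * χ ^ 2) * S b 0 χ - ((2 * b + 1) * χ + χ ^ 3) * S b 1 χ := by
  have h2 := S_add_two hb χ 0
  have h3 := S_add_two hb χ 1
  have h4 := S_add_two hb χ 2
  norm_num at h2 h3 h4
  refine ⟨by linear_combination h2, by linear_combination h3 - χ * h2, ?_⟩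
  linear_combination h4 - χ * h3 + (b + 2 + χ ^ 2) * h2
end

section
/- Let a, c be real and ε>1. Then lim_{λ→+∞} [Γ(c+λ)·Γ(1+a−c+(ε−1)λ) / (Γ(a+ελ) · (2πλ)^{1/2} · ε^{1/2−a−ελ} · (ε−1)^{1/2+a−c+(ε−1)λ})] = 1. That is, the quantity Ĝ(λ)=Γ(c+λ)Γ(1+a−c+(ε−1)λ)/Γ(a+ελ) satisfies Ĝ(λ) ~ (2πλ)^{1/2}·ε^{1/2−a−ελ}·(ε−1)^{1/2+a−c+(ε−1)λ} as λ→+∞. -/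
/-!
Stirling's formula for the factorial extends to the real Gamma function because both `Γ` and
`S(x) = √(2π) x^(x-1/2) e^(-x)` satisfy `f (x + s) ~ f x * x ^ s` uniformly in `s ∈ [0, 1]`:
for `Γ` this is Wendel's inequality, a consequence of log-convexity, and for `S` it is an
elementary logarithm estimate. Hence `Γ (t + y) ~ S(y) y^t`, and for the three Gamma factors
of `Ĝ` the main terms `S(y) y^t` multiply out exactly to the stated expression.
-/

open Real Filter Topology Asymptotics

noncomputable def stirlingApprox (x : ℝ) : ℝ := √(2 * π) * x ^ (x - 1 / 2) * exp (-x)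

theorem Gamma_add_le_Gamma_mul_rpow {x s : ℝ} (hx : 0 < x) (hs₀ : 0 ≤ s) (hs₁ : s ≤ 1) :
    Gamma (x + s) ≤ Gamma x * x ^ s := by
  have hΓ := Gamma_pos_of_pos hx
  have hconv := convexOn_log_Gamma.2 (Set.mem_Ioi.2 hx) (Set.mem_Ioi.2 (by linarith : 0 < x + 1))
    (sub_nonneg.2 hs₁) hs₀ (sub_add_cancel 1 s)
  simp only [smul_eq_mul, Function.comp_apply] at hconv
  rw [show (1 - s) * x + s * (x + 1) = x + s by ring, Gamma_add_one hx.ne',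
    log_mul hx.ne' hΓ.ne'] at hconv
  rw [← exp_log (Gamma_pos_of_pos (by linarith : 0 < x + s)),
    ← exp_log (mul_pos hΓ (rpow_pos_of_pos hx s)), log_mul hΓ.ne' (rpow_pos_of_pos hx s).ne',
    log_rpow hx]
  exact exp_le_exp.2 (by linarith)

theorem div_add_le_Gamma_add_div_Gamma_mul_rpow {x s : ℝ} (hx : 0 < x) (hs₀ : 0 ≤ s)
    (hs₁ : s ≤ 1) : x / (x + s) ≤ Gamma (x + s) / (Gamma x * x ^ s) := by
  have hxs : 0 < x + s := by linarith
  -- the upper bound, applied from `x + s` with step `1 - s`, bounds `Γ (x + 1)` from above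
  have hwendel := Gamma_add_le_Gamma_mul_rpow hxs (sub_nonneg.2 hs₁) (by linarith)
  rw [add_add_sub_cancel, Gamma_add_one hx.ne'] at hwendel
  rw [div_le_div_iff₀ hxs (mul_pos (Gamma_pos_of_pos hx) (rpow_pos_of_pos hx s))]
  calc x * (Gamma x * x ^ s) ≤ Gamma (x + s) * (x + s) ^ (1 - s) * (x + s) ^ s := by
        rw [← mul_assoc]
        exact mul_le_mul hwendel (rpow_le_rpow hx.le (by linarith) hs₀) (by positivity)
          (by positivity)
    _ = Gamma (x + s) * (x + s) := by
        rw [mul_assoc, ← rpow_add hxs, sub_add_cancel, rpow_one]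

theorem stirlingApprox_add {x s : ℝ} (hx : 0 < x) (hxs : 0 < x + s) :
    stirlingApprox (x + s) =
      stirlingApprox x * x ^ s * exp ((x + s - 1 / 2) * log (1 + s / x) - s) := by
  rw [show 1 + s / x = (x + s) / x by field_simp, log_div hxs.ne' hx.ne']
  simp only [stirlingApprox, rpow_def_of_pos hxs, rpow_def_of_pos hx, mul_assoc, ← exp_add]
  congr 2
  ring

theorem abs_stirling_correction_le {x s : ℝ} (hx : 1 / 2 ≤ x) (hs₀ : 0 ≤ s) (hs₁ : s ≤ 1) :
    |(x + s - 1 / 2) * log (1 + s / x) - s| ≤ (2 * x)⁻¹ := by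
  have hx₀ : 0 < x := by linarith
  have hpos : 0 < 1 + s / x := by positivity
  have hupper : log (1 + s / x) ≤ s / x := by linarith [log_le_sub_one_of_pos hpos]
  have hlower : s / (x + s) ≤ log (1 + s / x) := by
    have := one_sub_inv_le_log_of_pos hpos
    rwa [show 1 - (1 + s / x)⁻¹ = s / (x + s) by field_simp; ring] at this
  have hw : 0 ≤ x + s - 1 / 2 := by linarith
  rw [abs_le]
  constructor
  · calc -(2 * x)⁻¹ ≤ -s / (2 * (x + s)) := by
          rw [neg_div, neg_le_neg_iff, div_le_iff₀ (by positivity)]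
          field_simp
          nlinarith
      _ = (x + s - 1 / 2) * (s / (x + s)) - s := by field_simp; ring
      _ ≤ _ := by gcongr
  · calc (x + s - 1 / 2) * log (1 + s / x) - s ≤ (x + s - 1 / 2) * (s / x) - s := by gcongr
      _ = s * (s - 1 / 2) / x := by field_simp; ring
      _ ≤ (2 * x)⁻¹ := by
          rw [div_le_iff₀ hx₀]
          field_simp
          nlinarith

theorem isEquivalent_floor_of_bounds {f lo hi : ℝ → ℝ} (hlo : Tendsto lo atTop (𝓝 1))
    (hhi : Tendsto hi atTop (𝓝 1))
    (hbounds : ∀ᶠ x in atTop, ∀ s ∈ Set.Icc (0 : ℝ) 1,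
      lo x ≤ f (x + s) / (f x * x ^ s) ∧ f (x + s) / (f x * x ^ s) ≤ hi x) :
    f ~[atTop] fun y => f ⌊y⌋₊ * (⌊y⌋₊ : ℝ) ^ (y - ⌊y⌋₊) := by
  have hfloor : Tendsto (fun y : ℝ => (⌊y⌋₊ : ℝ)) atTop atTop :=
    tendsto_natCast_atTop_atTop.comp tendsto_nat_floor_atTop
  have hsqueeze : ∀ᶠ y in atTop, lo ⌊y⌋₊ ≤ f y / (f ⌊y⌋₊ * (⌊y⌋₊ : ℝ) ^ (y - ⌊y⌋₊)) ∧
      f y / (f ⌊y⌋₊ * (⌊y⌋₊ : ℝ) ^ (y - ⌊y⌋₊)) ≤ hi ⌊y⌋₊ := by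
    filter_upwards [hfloor.eventually hbounds, eventually_ge_atTop 0] with y hy hy₀
    have h := hy (y - ⌊y⌋₊) ⟨sub_nonneg.2 (Nat.floor_le hy₀), by linarith [Nat.lt_floor_add_one y]⟩
    rwa [add_sub_cancel] at h
  exact isEquivalent_of_tendsto_one <| tendsto_of_tendsto_of_tendsto_of_le_of_le'
    (hlo.comp hfloor) (hhi.comp hfloor) (hsqueeze.mono fun _ h => h.1)
    (hsqueeze.mono fun _ h => h.2)

theorem Gamma_isEquivalent_floor :
    Gamma ~[atTop] fun y => Gamma ⌊y⌋₊ * (⌊y⌋₊ : ℝ) ^ (y - ⌊y⌋₊) := by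
  refine isEquivalent_floor_of_bounds (lo := fun x => 1 - x⁻¹) (hi := fun _ => 1)
    (by simpa using tendsto_inv_atTop_zero.const_sub (1 : ℝ)) tendsto_const_nhds ?_
  filter_upwards [eventually_gt_atTop 0] with x hx s ⟨hs₀, hs₁⟩
  refine ⟨le_trans ?_ (div_add_le_Gamma_add_div_Gamma_mul_rpow hx hs₀ hs₁),
    div_le_one_of_le₀ (Gamma_add_le_Gamma_mul_rpow hx hs₀ hs₁) (by positivity)⟩
  rw [le_div_iff₀ (by linarith)]
  field_simp
  nlinarith

theorem stirlingApprox_isEquivalent_floor :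
    stirlingApprox ~[atTop] fun y => stirlingApprox ⌊y⌋₊ * (⌊y⌋₊ : ℝ) ^ (y - ⌊y⌋₊) := by
  have hlim (σ : ℝ) : Tendsto (fun x : ℝ => exp (σ * (2 * x)⁻¹)) atTop (𝓝 1) := by
    have h : Tendsto (fun x : ℝ => σ * (2 * x)⁻¹) atTop (𝓝 0) := by
      simpa using (tendsto_inv_atTop_zero.comp (tendsto_id.const_mul_atTop two_pos)).const_mul σ
    exact tendsto_exp_nhds_zero_nhds_one.comp h
  refine isEquivalent_floor_of_bounds (hlim (-1)) (hlim 1) ?_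
  filter_upwards [eventually_ge_atTop (1 / 2)] with x hx s ⟨hs₀, hs₁⟩
  have hx₀ : 0 < x := by linarith
  rw [stirlingApprox_add hx₀ (by linarith),
    mul_div_cancel_left₀ _ (by unfold stirlingApprox; positivity)]
  have := abs_le.1 (abs_stirling_correction_le hx hs₀ hs₁)
  constructor <;> gcongr <;> linarith

open Nat in
theorem Gamma_natCast_isEquivalent_stirlingApprox :
    (fun n : ℕ => Gamma n) ~[atTop] fun n => stirlingApprox n := by
  have hΓ : ∀ᶠ n : ℕ in atTop, (n ! : ℝ) / n = Gamma n := by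
    filter_upwards [eventually_gt_atTop 0] with n hn
    have hn' : (n : ℝ) ≠ 0 := Nat.cast_ne_zero.2 hn.ne'
    rw [div_eq_iff hn', ← Gamma_nat_eq_factorial, Gamma_add_one hn', mul_comm]
  have hS : ∀ᶠ n : ℕ in atTop, √(2 * n * π) * (n / exp 1) ^ n / n = stirlingApprox n := by
    filter_upwards [eventually_gt_atTop 0] with n hn
    have hn' : (0 : ℝ) < n := Nat.cast_pos.2 hn
    rw [stirlingApprox, rpow_sub hn', rpow_natCast, sqrt_eq_rpow, sqrt_eq_rpow, div_pow,
      exp_neg, ← exp_one_pow, mul_assoc 2, mul_comm (n : ℝ) π, ← mul_assoc,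
      mul_rpow (by positivity) hn'.le]
    field_simp
    rw [← rpow_natCast, ← rpow_mul hn'.le]
    norm_num
  exact ((Stirling.factorial_isEquivalent_stirling.div IsEquivalent.refl).congr_left hΓ).congr_right
    hS

theorem Gamma_isEquivalent_stirlingApprox : Gamma ~[atTop] stirlingApprox :=
  Gamma_isEquivalent_floor.trans <|
    ((Gamma_natCast_isEquivalent_stirlingApprox.comp_tendsto tendsto_nat_floor_atTop).mul
      IsEquivalent.refl).trans stirlingApprox_isEquivalent_floor.symm

theorem tendsto_stirling_correction (t : ℝ) :
    Tendsto (fun y : ℝ => (y + t - 1 / 2) * log (1 + t / y) - t) atTop (𝓝 0) := by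
  have hlog : Tendsto (fun y : ℝ => log (1 + t / y)) atTop (𝓝 0) := by
    have h := (tendsto_inv_atTop_zero.const_mul t).const_add 1
    simp only [mul_zero, add_zero] at h
    simpa [div_eq_mul_inv, Function.comp_def] using (continuousAt_log one_ne_zero).tendsto.comp h
  have h := ((tendsto_mul_log_one_add_div_atTop t).add (hlog.const_mul (t - 1 / 2))).sub_const t
  rw [mul_zero, add_zero, sub_self] at h
  exact h.congr fun y => by ring

theorem Gamma_add_isEquivalent (t : ℝ) :
    (fun y => Gamma (t + y)) ~[atTop] fun y => stirlingApprox y * y ^ t := by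
  refine (Gamma_isEquivalent_stirlingApprox.comp_tendsto
    (tendsto_atTop_add_const_left _ t tendsto_id)).trans
    (isEquivalent_iff_exists_eq_mul.2 ⟨_, tendsto_exp_nhds_zero_nhds_one.comp
      (tendsto_stirling_correction t), ?_⟩)
  filter_upwards [eventually_gt_atTop 0, eventually_gt_atTop (-t)] with y hy hyt
  simp only [Function.comp_apply, id, Pi.mul_apply]
  rw [add_comm t y, stirlingApprox_add hy (by linarith), mul_comm]

theorem ghat_stirling_main_terms_eq {a c ε lam : ℝ} (hε : 1 < ε) (hlam : 0 < lam) :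
    stirlingApprox lam * lam ^ c *
        (stirlingApprox ((ε - 1) * lam) * ((ε - 1) * lam) ^ (1 + a - c)) /
        (stirlingApprox (ε * lam) * (ε * lam) ^ a) =
      (2 * π * lam) ^ ((1 : ℝ) / 2) * ε ^ (1 / 2 - a - ε * lam) *
        (ε - 1) ^ (1 / 2 + a - c + (ε - 1) * lam) := by
  have hε₀ : 0 < ε := by linarith
  have hε₁ : 0 < ε - 1 := by linarith
  simp only [stirlingApprox, sqrt_eq_rpow, rpow_def_of_pos (by positivity : (0 : ℝ) < 2 * π),
    rpow_def_of_pos (by positivity : (0 : ℝ) < 2 * π * lam), rpow_def_of_pos hlam,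
    rpow_def_of_pos hε₀, rpow_def_of_pos hε₁, rpow_def_of_pos (mul_pos hε₀ hlam),
    rpow_def_of_pos (mul_pos hε₁ hlam), log_mul hε₀.ne' hlam.ne', log_mul hε₁.ne' hlam.ne',
    log_mul (by positivity : (2 : ℝ) * π ≠ 0) hlam.ne', ← exp_add, ← exp_sub]
  congr 1
  ring

/-- Stirling-type asymptotics:
`Ĝ(λ) = Γ(c+λ)Γ(1+a-c+(ε-1)λ)/Γ(a+ελ) ~ (2πλ)^{1/2} ε^{1/2-a-ελ} (ε-1)^{1/2+a-c+(ε-1)λ}`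
as `λ → +∞`, stated as the ratio tending to `1`. -/
theorem Ghat_asymptotics (a c ε : ℝ) (hε : 1 < ε) :
    Tendsto
      (fun lam : ℝ =>
        Real.Gamma (c + lam) * Real.Gamma (1 + a - c + (ε - 1) * lam) / Real.Gamma (a + ε * lam) /
          ((2 * Real.pi * lam) ^ ((1 : ℝ) / 2) * ε ^ (1 / 2 - a - ε * lam) *
            (ε - 1) ^ (1 / 2 + a - c + (ε - 1) * lam)))
      atTop (𝓝 1) := by
  have hε₁ : 0 < ε - 1 := sub_pos.2 hε
  have hGamma := ((Gamma_add_isEquivalent c).mul ((Gamma_add_isEquivalent (1 + a - c)).comp_tendsto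
      (tendsto_id.const_mul_atTop hε₁))).div
    ((Gamma_add_isEquivalent a).comp_tendsto (tendsto_id.const_mul_atTop (by linarith)))
  refine (isEquivalent_iff_tendsto_one ?_).1 (hGamma.congr_right ?_)
  · filter_upwards [eventually_gt_atTop 0] with lam hlam
    positivity
  · filter_upwards [eventually_gt_atTop 0] with lam hlam using ghat_stirling_main_terms_eq hε hlam
end

section
/- Let ε>1 and 0<x<1, and set ψ(x,t)=ε·log(1−xt)−log(1−t) and t_s=(εx−1)/((ε−1)x). Then (i) ψ(x,t_s) = ε·log(ε(1−x)/(ε−1)) − log((1−x)/((ε−1)x)); and (ii) writing δ=εx−1, as δ→0 (i.e. as x→1/ε), ψ(x,t_s) = −ε·δ²/(2(ε−1)) + ε(ε−2)·δ³/(3(ε−1)²) + O(δ⁴). -/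
open Real Filter Topology Asymptotics

/-!
At `x = (1 + δ)/ε` the saddle point gives `1 - x t_s = 1 - δ/(ε-1)` and
`1 - t_s = (1 - δ/(ε-1))/(1 + δ)`, so `ψ(x, t_s) = (ε-1) log(1 - δ/(ε-1)) + log(1 + δ)`.
Expanding both logarithms to third order, the linear terms cancel and the quadratic and cubic
coefficients are `-(1/(ε-1) + 1)/2` and `(1 - 1/(ε-1)²)/3`.
-/

lemma isBigO_log_one_sub_add_sum_range (n : ℕ) :
    (fun y : ℝ => (∑ i ∈ Finset.range n, y ^ (i + 1) / (i + 1)) + log (1 - y))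
      =O[𝓝 0] fun y => y ^ (n + 1) := by
  refine IsBigO.of_bound 2 ?_
  filter_upwards [Metric.ball_mem_nhds (0 : ℝ) one_half_pos] with y hy
  have hy : |y| < 1 / 2 := by simpa using hy
  have hden : 1 / 2 ≤ 1 - |y| := by linarith
  calc ‖(∑ i ∈ Finset.range n, y ^ (i + 1) / (i + 1)) + log (1 - y)‖
      ≤ |y| ^ (n + 1) / (1 - |y|) := abs_log_sub_add_sum_range_le (by linarith) n
    _ ≤ |y| ^ (n + 1) / (1 / 2) := by gcongr
    _ = 2 * ‖y ^ (n + 1)‖ := by rw [norm_pow, Real.norm_eq_abs]; ring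

lemma isBigO_log_one_sub_mul_add_cubic (c : ℝ) :
    (fun δ : ℝ => log (1 - c * δ) + (c * δ + (c * δ) ^ 2 / 2 + (c * δ) ^ 3 / 3))
      =O[𝓝 0] fun δ => δ ^ 4 := by
  have hcδ : Tendsto (fun δ : ℝ => c * δ) (𝓝 0) (𝓝 0) := by
    simpa using (continuous_const_mul c).tendsto 0
  have h := (isBigO_log_one_sub_add_sum_range 3).comp_tendsto hcδ
  refine (h.trans ?_).congr_left fun δ => ?_
  · simpa [Function.comp_def, mul_pow] using
      isBigO_const_mul_self (c ^ 4) (fun δ : ℝ => δ ^ 4) (𝓝 0)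
  · simp only [Function.comp, Finset.sum_range_succ, Finset.sum_range_zero]
    ring

section Saddle

variable {ε x : ℝ}

lemma one_sub_mul_saddle (hε : ε ≠ 1) (hx : x ≠ 0) :
    1 - x * ((ε * x - 1) / ((ε - 1) * x)) = ε * (1 - x) / (ε - 1) := by
  have : ε - 1 ≠ 0 := sub_ne_zero.mpr hε
  field_simp
  ring

lemma one_sub_saddle (hε : ε ≠ 1) (hx : x ≠ 0) :
    1 - (ε * x - 1) / ((ε - 1) * x) = (1 - x) / ((ε - 1) * x) := by
  have : ε - 1 ≠ 0 := sub_ne_zero.mpr hε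
  field_simp
  ring

lemma psi_saddle_eq_of_shift {δ : ℝ} (hε0 : ε ≠ 0) (hε1 : ε ≠ 1) (hδ : 1 + δ ≠ 0)
    (hδε : 1 - δ / (ε - 1) ≠ 0) :
    ε * log (1 - (1 + δ) / ε * ((ε * ((1 + δ) / ε) - 1) / ((ε - 1) * ((1 + δ) / ε))))
        - log (1 - (ε * ((1 + δ) / ε) - 1) / ((ε - 1) * ((1 + δ) / ε)))
      = (ε - 1) * log (1 - δ / (ε - 1)) + log (1 + δ) := by
  have hx : (1 + δ) / ε ≠ 0 := div_ne_zero hδ hε0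
  have : ε - 1 ≠ 0 := sub_ne_zero.mpr hε1
  have h1 : 1 - (1 + δ) / ε * ((ε * ((1 + δ) / ε) - 1) / ((ε - 1) * ((1 + δ) / ε)))
      = 1 - δ / (ε - 1) := by
    rw [one_sub_mul_saddle hε1 hx]
    field_simp
    ring
  have h2 : 1 - (ε * ((1 + δ) / ε) - 1) / ((ε - 1) * ((1 + δ) / ε))
      = (1 - δ / (ε - 1)) / (1 + δ) := by
    rw [one_sub_saddle hε1 hx]
    field_simp
    ring
  rw [h1, h2, log_div hδε hδ]
  ring

end Saddle

theorem psi_at_saddle_general (ε x : ℝ) (hε : 1 < ε) (hx0 : 0 < x) :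
    (ε * Real.log (1 - x * ((ε * x - 1) / ((ε - 1) * x)))
        - Real.log (1 - (ε * x - 1) / ((ε - 1) * x))
      = ε * Real.log (ε * (1 - x) / (ε - 1)) - Real.log ((1 - x) / ((ε - 1) * x))) ∧
    (fun δ : ℝ =>
        (ε * Real.log (1 - (1 + δ) / ε * ((ε * ((1 + δ) / ε) - 1) / ((ε - 1) * ((1 + δ) / ε))))
          - Real.log (1 - (ε * ((1 + δ) / ε) - 1) / ((ε - 1) * ((1 + δ) / ε))))
        - (-ε * δ ^ 2 / (2 * (ε - 1)) + ε * (ε - 2) * δ ^ 3 / (3 * (ε - 1) ^ 2)))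
      =O[𝓝 0] fun δ : ℝ => δ ^ 4 := by
  have hε1 : ε ≠ 1 := hε.ne'
  have hε0 : ε ≠ 0 := by positivity
  refine ⟨by rw [one_sub_mul_saddle hε1 hx0.ne', one_sub_saddle hε1 hx0.ne'], ?_⟩
  have hexp := ((isBigO_log_one_sub_mul_add_cubic (1 / (ε - 1))).const_mul_left (ε - 1)).add
    (isBigO_log_one_sub_mul_add_cubic (-1))
  refine hexp.congr' ?_ EventuallyEq.rfl
  have hδ : ∀ᶠ δ : ℝ in 𝓝 0, 1 + δ ≠ 0 :=
    (continuous_const.add continuous_id).continuousAt.eventually_ne (by norm_num)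
  have hδε : ∀ᶠ δ : ℝ in 𝓝 0, 1 - δ / (ε - 1) ≠ 0 :=
    (continuous_const.sub (continuous_id.div_const _)).continuousAt.eventually_ne (by norm_num)
  filter_upwards [hδ, hδε] with δ hδ hδε
  rw [psi_saddle_eq_of_shift hε0 hε1 hδ hδε, neg_one_mul, sub_neg_eq_add]
  have : ε - 1 ≠ 0 := sub_ne_zero.mpr hε1
  field_simp
  ring

/-- For `ε > 1`, `0 < x < 1`, with `ψ(x,t) = ε log(1-xt) - log(1-t)` and
`t_s = (εx-1)/((ε-1)x)`:
(i) `ψ(x,t_s) = ε log(ε(1-x)/(ε-1)) - log((1-x)/((ε-1)x))`;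
(ii) writing `δ = εx - 1` (so `x = (1+δ)/ε`), as `δ → 0`,
`ψ(x,t_s) = -εδ²/(2(ε-1)) + ε(ε-2)δ³/(3(ε-1)²) + O(δ⁴)`. -/
theorem psi_at_saddle (ε x : ℝ) (hε : 1 < ε) (hx0 : 0 < x) (hx1 : x < 1) :
    (ε * Real.log (1 - x * ((ε * x - 1) / ((ε - 1) * x)))
        - Real.log (1 - (ε * x - 1) / ((ε - 1) * x))
      = ε * Real.log (ε * (1 - x) / (ε - 1)) - Real.log ((1 - x) / ((ε - 1) * x))) ∧
    (fun δ : ℝ =>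
        (ε * Real.log (1 - (1 + δ) / ε * ((ε * ((1 + δ) / ε) - 1) / ((ε - 1) * ((1 + δ) / ε))))
          - Real.log (1 - (ε * ((1 + δ) / ε) - 1) / ((ε - 1) * ((1 + δ) / ε))))
        - (-ε * δ ^ 2 / (2 * (ε - 1)) + ε * (ε - 2) * δ ^ 3 / (3 * (ε - 1) ^ 2)))
      =O[𝓝 0] fun δ : ℝ => δ ^ 4 :=
  psi_at_saddle_general ε x hε hx0
end

section
/- Let U⊆ℂ be an open convex set containing 0 and a point α≠0, and let g:U→ℂ be holomorphic. Then there exists a holomorphic function G₀:U→ℂ such that for all u∈U, g(u) = g(α) + ((g(α)−g(0))/α)·(u−α) + u·(u−α)·G₀(u). Moreover G₀ is unique and is given for u∉{0,α} by G₀(u) = (α·g(u) − u·g(α) + (u−α)·g(0))/(α·u·(u−α)). -/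
open Complex Set

/-- The Bleistein decomposition: for `g` holomorphic on an open convex set `U ∋ 0, α` (`α ≠ 0`)
there is a unique holomorphic `G₀` on `U` with
`g(u) = g(α) + ((g(α)-g(0))/α)(u-α) + u(u-α)G₀(u)` on `U`, and for `u ∉ {0, α}`,
`G₀(u) = (α g(u) - u g(α) + (u-α) g(0))/(α u (u-α))`. -/
theorem bleistein_decomposition (U : Set ℂ) (hU : IsOpen U) (hconv : Convex ℝ U)
    (α : ℂ) (h0 : (0 : ℂ) ∈ U) (hα : α ∈ U) (hα0 : α ≠ 0)
    (g : ℂ → ℂ) (hg : DifferentiableOn ℂ g U) :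
    ∃ G₀ : ℂ → ℂ, DifferentiableOn ℂ G₀ U ∧
      (∀ u ∈ U, g u = g α + (g α - g 0) / α * (u - α) + u * (u - α) * G₀ u) ∧
      (∀ u ∈ U, u ≠ 0 → u ≠ α →
        G₀ u = (α * g u - u * g α + (u - α) * g 0) / (α * u * (u - α))) ∧
      (∀ G₁ : ℂ → ℂ, DifferentiableOn ℂ G₁ U →
        (∀ u ∈ U, g u = g α + (g α - g 0) / α * (u - α) + u * (u - α) * G₁ u) →
        EqOn G₁ G₀ U) := by
  set h : ℂ → ℂ := fun u => g u - g α - (g α - g 0) / α * (u - α) with hh_def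
  have hh : DifferentiableOn ℂ h U :=
    (hg.sub (differentiableOn_const _)).sub
      ((differentiableOn_const _).mul (differentiableOn_id.sub (differentiableOn_const _)))
  have hh0 : h 0 = 0 := by
    simp only [hh_def]
    field_simp
    ring
  have hhα : h α = 0 := by simp [hh_def]
  set h1 : ℂ → ℂ := dslope h 0 with h1_def
  have hh1 : DifferentiableOn ℂ h1 U :=
    (differentiableOn_dslope (hU.mem_nhds h0)).mpr hh
  have hh1_ne : ∀ u : ℂ, u ≠ 0 → h1 u = h u / u := by
    intro u hu
    rw [h1_def, dslope_of_ne _ hu, slope_def_field, hh0, sub_zero, sub_zero]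
  have hh1α : h1 α = 0 := by rw [hh1_ne α hα0, hhα, zero_div]
  set G₀ : ℂ → ℂ := dslope h1 α with G₀_def
  have hG₀ : DifferentiableOn ℂ G₀ U :=
    (differentiableOn_dslope (hU.mem_nhds hα)).mpr hh1
  have hG₀_ne : ∀ u : ℂ, u ≠ 0 → u ≠ α → G₀ u = h u / (u * (u - α)) := by
    intro u hu huα
    rw [G₀_def, dslope_of_ne _ huα, slope_def_field, hh1α, sub_zero, hh1_ne u hu]
    rw [div_div]
  have key : ∀ u ∈ U, g u = g α + (g α - g 0) / α * (u - α) + u * (u - α) * G₀ u := by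
    intro u _
    rcases eq_or_ne u 0 with rfl | hu
    · have hd : (g α - g 0) / α * (0 - α) = g 0 - g α := by field_simp; ring
      rw [hd]; ring
    rcases eq_or_ne u α with rfl | huα
    · simp [sub_self]
    · rw [hG₀_ne u hu huα]
      have hne : u * (u - α) ≠ 0 := mul_ne_zero hu (sub_ne_zero.mpr huα)
      rw [mul_div_cancel₀ _ hne, hh_def]
      ring
  refine ⟨G₀, hG₀, key, ?_, ?_⟩
  · intro u _ hu huα
    rw [hG₀_ne u hu huα, hh_def]
    have hne : u - α ≠ 0 := sub_ne_zero.mpr huα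
    field_simp
    ring
  · intro G₁ hG₁ hkey u huU
    have heq' : EqOn G₁ G₀ (U \ {0, α}) := by
      intro v hv
      have hv0 : v ≠ 0 := fun hc => hv.2 (by simp [hc])
      have hvα : v ≠ α := fun hc => hv.2 (by simp [hc])
      have h1' := hkey v hv.1
      have h2' := key v hv.1
      have hne : v * (v - α) ≠ 0 := mul_ne_zero hv0 (sub_ne_zero.mpr hvα)
      have : v * (v - α) * G₁ v = v * (v - α) * G₀ v := by linear_combination h2' - h1'
      exact mul_left_cancel₀ hne this
    have hNB : (nhdsWithin u (U \ {0, α})).NeBot := by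
      rw [diff_eq, inter_comm,
        nhdsWithin_inter_of_mem' (mem_nhdsWithin_of_mem_nhds (hU.mem_nhds huU))]
      refine mem_closure_iff_nhdsWithin_neBot.mp ?_
      exact (Set.Countable.dense_compl ℂ ((Set.countable_singleton α).insert 0)) u
    have hc1 : Filter.Tendsto G₁ (nhdsWithin u (U \ {0, α})) (nhds (G₁ u)) :=
      ((hG₁.continuousOn u huU).mono diff_subset).tendsto
    have hc2 : Filter.Tendsto G₀ (nhdsWithin u (U \ {0, α})) (nhds (G₀ u)) :=
      ((hG₀.continuousOn u huU).mono diff_subset).tendsto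
    have hc2' : Filter.Tendsto G₁ (nhdsWithin u (U \ {0, α})) (nhds (G₀ u)) :=
      hc2.congr' (eventuallyEq_nhdsWithin_of_eqOn heq').symm
    exact tendsto_nhds_unique hc1 hc2'
end

section
/- Let b∈ℝ, let U⊆ℂ be an open convex set containing 0 and a point α≠0, let g:U→ℂ be holomorphic, set B₀=(g(α)−g(0))/α, let G₀ be the unique holomorphic function on U with g(u)=g(α)+B₀(u−α)+u(u−α)G₀(u), and define g₁(u)=b·G₀(u)+u·G₀′(u). Then g₁(0) = (b/α)·(B₀ − g′(0)) and g₁(α) = ((1−b)/α)·(B₀ − g′(α)) + g″(α)/2. -/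
/-!
Differentiating the decomposition `g u = g α + B₀ (u - α) + u (u - α) G₀ u` gives
`g' = B₀ + (2u - α) G₀ + u (u - α) G₀'`, hence `g'(0) = B₀ - α G₀(0)` and `g'(α) = B₀ + α G₀(α)`;
differentiating once more at the zero `α` of `u (u - α)` gives `g''(α) = 2 G₀(α) + 2 α G₀'(α)`.
Both identities are then linear algebra in `G₀(0)`, `G₀(α)`, `G₀'(α)`.
-/

open Set

section Bleistein

variable {𝕜 : Type*} [NontriviallyNormedField 𝕜] {g G : 𝕜 → 𝕜} {U : Set 𝕜} {c B α x : 𝕜}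

theorem hasDerivAt_bleistein {G' : 𝕜} (hG : HasDerivAt G G' x) :
    HasDerivAt (fun u => c + B * (u - α) + u * (u - α) * G u)
      (B + (2 * x - α) * G x + x * (x - α) * G') x := by
  have h := ((hasDerivAt_const x c).add (((hasDerivAt_id x).sub_const α).const_mul B)).add
    (((hasDerivAt_id x).mul ((hasDerivAt_id x).sub_const α)).mul hG)
  exact h.congr_deriv (by simp only [id, Pi.mul_apply]; ring)

theorem hasDerivAt_bleistein_deriv {H : 𝕜 → 𝕜} {H' : 𝕜} (hG : HasDerivAt G (H x) x)
    (hH : HasDerivAt H H' x) :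
    HasDerivAt (fun u => B + (2 * u - α) * G u + u * (u - α) * H u)
      (2 * G x + 2 * (2 * x - α) * H x + x * (x - α) * H') x := by
  have h := ((hasDerivAt_const x B).add
    ((((hasDerivAt_id x).const_mul 2).sub_const α).mul hG)).add
    (((hasDerivAt_id x).mul ((hasDerivAt_id x).sub_const α)).mul hH)
  exact h.congr_deriv (by simp only [id, Pi.mul_apply]; ring)

variable (hU : IsOpen U) (hG : DifferentiableOn 𝕜 G U)
  (hdecomp : EqOn g (fun u => c + B * (u - α) + u * (u - α) * G u) U)
include hU hG hdecomp

theorem hasDerivAt_of_eqOn_bleistein (hx : x ∈ U) :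
    HasDerivAt g (B + (2 * x - α) * G x + x * (x - α) * deriv G x) x :=
  (hasDerivAt_bleistein (hG.differentiableAt (hU.mem_nhds hx)).hasDerivAt).congr_of_eventuallyEq
    (Filter.eventuallyEq_of_mem (hU.mem_nhds hx) hdecomp)

theorem deriv_of_eqOn_bleistein (hx : x ∈ U) :
    deriv g x = B + (2 * x - α) * G x + x * (x - α) * deriv G x :=
  (hasDerivAt_of_eqOn_bleistein hU hG hdecomp hx).deriv

theorem iteratedDeriv_two_of_eqOn_bleistein (hα : α ∈ U)
    (hG' : DifferentiableAt 𝕜 (deriv G) α) :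
    iteratedDeriv 2 g α = 2 * G α + 2 * α * deriv G α := by
  have hderiv : deriv g =ᶠ[nhds α]
      fun u => B + (2 * u - α) * G u + u * (u - α) * deriv G u :=
    Filter.eventuallyEq_of_mem (hU.mem_nhds hα) fun u hu =>
      deriv_of_eqOn_bleistein hU hG hdecomp hu
  have h := hasDerivAt_bleistein_deriv (B := B) (α := α)
    (hG.differentiableAt (hU.mem_nhds hα)).hasDerivAt hG'.hasDerivAt
  rw [iteratedDeriv_succ, iteratedDeriv_one, hderiv.deriv_eq, h.deriv]
  ring

end Bleistein

theorem bleistein_g1_values_general (b : ℝ) (U : Set ℂ) (hU : IsOpen U)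
    (α : ℂ) (h0 : (0 : ℂ) ∈ U) (hα : α ∈ U) (hα0 : α ≠ 0)
    (g G₀ : ℂ → ℂ) (hG₀ : DifferentiableOn ℂ G₀ U)
    (hdecomp : ∀ u ∈ U,
      g u = g α + (g α - g 0) / α * (u - α) + u * (u - α) * G₀ u) :
    (b : ℂ) * G₀ 0 + 0 * deriv G₀ 0
        = (b / α) * ((g α - g 0) / α - deriv g 0) ∧
    (b : ℂ) * G₀ α + α * deriv G₀ α
        = ((1 - b) / α) * ((g α - g 0) / α - deriv g α) + iteratedDeriv 2 g α / 2 := by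
  have hdecomp' : EqOn g _ U := fun _ hu => hdecomp _ hu
  have hd0 := deriv_of_eqOn_bleistein hU hG₀ hdecomp' h0
  have hdα := deriv_of_eqOn_bleistein hU hG₀ hdecomp' hα
  have hd2 := iteratedDeriv_two_of_eqOn_bleistein hU hG₀ hdecomp' hα
    ((hG₀.analyticOnNhd hU).deriv α hα).differentiableAt
  rw [hd0, hdα, hd2]
  constructor <;> · field_simp; ring

/-- Values (A.2), (A.3): with `B₀ = (g(α)-g(0))/α`, `G₀` the Bleistein remainder of `g`, and
`g₁(u) = b G₀(u) + u G₀'(u)`, one has `g₁(0) = (b/α)(B₀ - g'(0))` and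
`g₁(α) = ((1-b)/α)(B₀ - g'(α)) + g''(α)/2`. -/
theorem bleistein_g1_values (b : ℝ) (U : Set ℂ) (hU : IsOpen U) (hconv : Convex ℝ U)
    (α : ℂ) (h0 : (0 : ℂ) ∈ U) (hα : α ∈ U) (hα0 : α ≠ 0)
    (g G₀ : ℂ → ℂ) (hg : DifferentiableOn ℂ g U) (hG₀ : DifferentiableOn ℂ G₀ U)
    (hdecomp : ∀ u ∈ U,
      g u = g α + (g α - g 0) / α * (u - α) + u * (u - α) * G₀ u) :
    (b : ℂ) * G₀ 0 + 0 * deriv G₀ 0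
        = (b / α) * ((g α - g 0) / α - deriv g 0) ∧
    (b : ℂ) * G₀ α + α * deriv G₀ α
        = ((1 - b) / α) * ((g α - g 0) / α - deriv g α) + iteratedDeriv 2 g α / 2 :=
  bleistein_g1_values_general b U hU α h0 hα hα0 g G₀ hG₀ hdecomp
end

section
/- Let m≥1 be an integer, let a, c be real, let ε>0 and 0<x<1 with εx≠1, and for λ>0 large define F(λ) = Σ_{r=0}^{m} C(m,r)·(−x)^r·(a+ελ)_r/(c+λ)_r, where (y)_r is the Pochhammer symbol and C(m,r) the binomial coefficient (this is the terminating Gauss hypergeometric function ₂F₁(a+ελ,−m;c+λ;x)). Then, with X = εx/(1−εx), as λ→+∞: F(λ) = (1−εx)^m·(1 − (m/(ελ))·((a−εc)·X + ((m−1)(ε−1)/2)·X²)) + O(λ^{−2}); equivalently, λ·((1−εx)^{−m}·F(λ) − 1) tends to −(m/ε)·((a−εc)X + ((m−1)(ε−1)/2)X²). -/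
/-!
With `αⱼ = (a + j)/ε` and `βⱼ = c + j`, the `r`-th term of `F(λ)` is
`C(m,r) (-εx)^r ∏_{j<r} (λ + αⱼ)/(λ + βⱼ)`, and each factor is `1 + (αⱼ - βⱼ)/λ + O(λ⁻²)`.
Expansions of this shape are stable under finite sums and products, so
`F(λ) = Σ_r κ_r + (Σ_r κ_r S_r)/λ + O(λ⁻²)` with `κ_r = C(m,r)(-εx)^r` and
`S_r = Σ_{j<r} (αⱼ - βⱼ) = r (a/ε - c) + C(r,2) (1/ε - 1)`. Both coefficients are binomial
moments `Σ_r C(m,r) C(r,s) y^r = C(m,s) y^s (1+y)^(m-s)` at `y = -εx`, `s = 0, 1, 2`.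
-/

open Filter Topology Asymptotics Finset

def HasFirstOrderExpansion (f : ℝ → ℝ) (A B : ℝ) : Prop :=
  (fun t => f t - (A + B / t)) =O[atTop] fun t => 1 / t ^ 2

namespace HasFirstOrderExpansion

variable {f g : ℝ → ℝ} {A B A' B' : ℝ}

theorem tendsto (h : HasFirstOrderExpansion f A B) : Tendsto f atTop (𝓝 A) := by
  have hrem : Tendsto (fun t => f t - (A + B / t)) atTop (𝓝 0) :=
    IsBigO.trans_tendsto h <| by
      simpa only [one_div, Function.comp_def] using
        tendsto_inv_atTop_zero.comp (tendsto_pow_atTop two_ne_zero)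
  have hmain : Tendsto (fun t : ℝ => A + B / t) atTop (𝓝 A) := by
    simpa using (tendsto_const_nhds (x := A)).add (tendsto_const_nhds.div_atTop tendsto_id)
  simpa using hrem.add hmain

theorem tendsto_mul_sub (h : HasFirstOrderExpansion f A B) :
    Tendsto (fun t => t * (f t - A)) atTop (𝓝 B) := by
  have hrem : Tendsto (fun t => t * (f t - (A + B / t))) atTop (𝓝 0) := by
    refine ((isBigO_refl (fun t : ℝ => t) atTop).mul h).trans_tendsto ?_
    refine tendsto_inv_atTop_zero.congr' ?_
    filter_upwards [eventually_ne_atTop 0] with t ht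
    field_simp
  refine (zero_add B ▸ hrem.add_const B).congr' ?_
  filter_upwards [eventually_ne_atTop 0] with t ht
  field_simp
  ring

theorem tendsto_mul_div_sub_one (h : HasFirstOrderExpansion f A B) (hA : A ≠ 0) :
    Tendsto (fun t => t * (f t / A - 1)) atTop (𝓝 (B / A)) :=
  (h.tendsto_mul_sub.div_const A).congr fun t => by field_simp

theorem add (hf : HasFirstOrderExpansion f A B) (hg : HasFirstOrderExpansion g A' B') :
    HasFirstOrderExpansion (fun t => f t + g t) (A + A') (B + B') :=
  (IsBigO.add hf hg).congr_left fun t => by ring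

theorem const_mul (h : HasFirstOrderExpansion f A B) (k : ℝ) :
    HasFirstOrderExpansion (fun t => k * f t) (k * A) (k * B) :=
  (IsBigO.const_mul_left h k).congr_left fun t => by ring

theorem mul (hf : HasFirstOrderExpansion f A B) (hg : HasFirstOrderExpansion g A' B') :
    HasFirstOrderExpansion (fun t => f t * g t) (A * A') (A * B' + A' * B) := by
  have hg_bdd : g =O[atTop] fun _ => (1 : ℝ) := hg.tendsto.isBigO_one ℝ
  have hmain_bdd : (fun t : ℝ => A + B / t) =O[atTop] fun _ => (1 : ℝ) :=
    (tendsto_const_nhds (x := A)).add (tendsto_const_nhds.div_atTop tendsto_id) |>.isBigO_one ℝ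
  have := (((IsBigO.mul hf hg_bdd).congr_right fun t => mul_one _).add
    ((IsBigO.mul hmain_bdd hg).congr_right fun t => one_mul _)).add
    (isBigO_const_mul_self (B * B') (fun t : ℝ => 1 / t ^ 2) atTop)
  exact this.congr_left fun t => by ring

theorem sum {ι : Type*} (s : Finset ι) {f : ι → ℝ → ℝ} {A B : ι → ℝ}
    (h : ∀ i ∈ s, HasFirstOrderExpansion (f i) (A i) (B i)) :
    HasFirstOrderExpansion (fun t => ∑ i ∈ s, f i t) (∑ i ∈ s, A i) (∑ i ∈ s, B i) :=
  (IsBigO.fun_sum h).congr_left fun t => by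
    simp only [sum_div, ← sum_add_distrib, sum_sub_distrib]

theorem prod {ι : Type*} (s : Finset ι) {f : ι → ℝ → ℝ} {B : ι → ℝ}
    (h : ∀ i ∈ s, HasFirstOrderExpansion (f i) 1 (B i)) :
    HasFirstOrderExpansion (fun t => ∏ i ∈ s, f i t) 1 (∑ i ∈ s, B i) := by
  induction s using Finset.cons_induction with
  | empty => simpa [HasFirstOrderExpansion] using isBigO_zero _ _
  | cons i s hi ih =>
    have := (h i (mem_cons_self i s)).mul (ih fun j hj => h j (mem_cons_of_mem hj))
    simpa only [prod_cons, sum_cons, one_mul, mul_one, add_comm] using this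

end HasFirstOrderExpansion

theorem hasFirstOrderExpansion_add_div_add (α β : ℝ) :
    HasFirstOrderExpansion (fun t => (t + α) / (t + β)) 1 (α - β) := by
  have hratio : Tendsto (fun t : ℝ => t / (t + β)) atTop (𝓝 1) := by
    have h := ((tendsto_const_nhds (x := (1 : ℝ))).add
      ((tendsto_const_nhds (x := β)).mul tendsto_inv_atTop_zero)).inv₀ (by simp)
    simp only [mul_zero, add_zero, inv_one] at h
    refine h.congr' ?_
    filter_upwards [eventually_gt_atTop 0, eventually_gt_atTop (-β)] with t ht htβ
    field_simp
  have := ((isBigO_const_mul_self (-β * (α - β)) (fun t : ℝ => 1 / t ^ 2) atTop).mul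
    (hratio.isBigO_one ℝ)).congr_right fun t => mul_one _
  refine this.congr' ?_ EventuallyEq.rfl
  filter_upwards [eventually_gt_atTop 0, eventually_gt_atTop (-β)] with t ht htβ
  have : t + β ≠ 0 := by linarith
  field_simp
  ring

theorem ascPochhammer_eval_eq_prod_range {R : Type*} [CommSemiring R] (n : ℕ) (r : R) :
    (ascPochhammer R n).eval r = ∏ j ∈ range n, (r + j) := by
  induction n with
  | zero => simp
  | succ n ih => rw [ascPochhammer_succ_eval, prod_range_succ, ih]

theorem ascPochhammer_eval_div_eval_eq_pow_mul_prod {ε : ℝ} (hε : ε ≠ 0) (a c t : ℝ) (r : ℕ) :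
    (ascPochhammer ℝ r).eval (a + ε * t) / (ascPochhammer ℝ r).eval (c + t) =
      ε ^ r * ∏ j ∈ range r, (t + (a + j) / ε) / (t + (c + j)) := by
  rw [ascPochhammer_eval_eq_prod_range, ascPochhammer_eval_eq_prod_range, ← prod_div_distrib,
    pow_eq_prod_const, ← prod_mul_distrib]
  refine prod_congr rfl fun j _ => ?_
  rw [← mul_div_assoc]
  congr 1 <;> field_simp <;> ring

theorem hasFirstOrderExpansion_terminating_hypergeometric (m : ℕ) (a c : ℝ) {ε : ℝ} (hε : ε ≠ 0)
    (x : ℝ) :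
    HasFirstOrderExpansion
      (fun t => ∑ r ∈ range (m + 1), (m.choose r : ℝ) * (-x) ^ r *
        ((ascPochhammer ℝ r).eval (a + ε * t) / (ascPochhammer ℝ r).eval (c + t)))
      (∑ r ∈ range (m + 1), (m.choose r : ℝ) * (-(ε * x)) ^ r)
      (∑ r ∈ range (m + 1), (m.choose r : ℝ) * (-(ε * x)) ^ r *
        ∑ j ∈ range r, ((a + j) / ε - (c + j))) := by
  have hterms := HasFirstOrderExpansion.sum (range (m + 1)) fun r _ =>
    (HasFirstOrderExpansion.prod (range r) fun j _ =>
      hasFirstOrderExpansion_add_div_add ((a + j) / ε) (c + j)).const_mul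
        ((m.choose r : ℝ) * (-(ε * x)) ^ r)
  simp only [mul_one] at hterms
  convert hterms using 2 with t
  refine sum_congr rfl fun r _ => ?_
  rw [ascPochhammer_eval_div_eval_eq_pow_mul_prod hε, neg_mul_eq_mul_neg, mul_pow]
  ring

/-- Stated multiplied by `(1 + y) ^ s` so that no truncated exponent `m - s` appears. -/
theorem sum_range_choose_mul_choose_mul_pow {R : Type*} [CommSemiring R] (m s : ℕ) (y : R) :
    (∑ r ∈ range (m + 1), (m.choose r * r.choose s : R) * y ^ r) * (1 + y) ^ s =
      m.choose s * y ^ s * (1 + y) ^ m := by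
  obtain hms | hsm := lt_or_ge m s
  · have hvanish : ∀ r ∈ range (m + 1), (m.choose r * r.choose s : R) * y ^ r = 0 := fun r hr => by
      rw [Nat.choose_eq_zero_of_lt (n := r) (by grind)]; simp
    simp [sum_eq_zero hvanish, Nat.choose_eq_zero_of_lt hms]
  obtain ⟨k, rfl⟩ := Nat.exists_eq_add_of_le hsm
  have hlow : ∀ r ∈ range s, ((s + k).choose r * r.choose s : R) * y ^ r = 0 := fun r hr => by
    rw [Nat.choose_eq_zero_of_lt (mem_range.1 hr)]; simp
  have hhigh : ∀ i ∈ range (k + 1), ((s + k).choose (s + i) * (s + i).choose s : R) * y ^ (s + i) =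
      (s + k).choose s * y ^ s * (y ^ i * 1 ^ (k - i) * k.choose i) := fun i _ => by
    rw [← Nat.cast_mul, Nat.choose_mul (Nat.le_add_right s i)]
    simp only [Nat.add_sub_cancel_left, Nat.cast_mul, one_pow, mul_one, pow_add]
    ring
  rw [add_assoc, sum_range_add, sum_eq_zero hlow, zero_add, sum_congr rfl hhigh, ← mul_sum,
    ← add_pow, pow_add (1 + y), add_comm y 1]
  ring

theorem sum_range_div_sub (a c ε : ℝ) (r : ℕ) :
    ∑ j ∈ range r, ((a + j) / ε - (c + j)) = r * (a / ε - c) + r.choose 2 * (1 / ε - 1) := by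
  have hid : ∑ j ∈ range r, (j : ℝ) = r.choose 2 := by
    rw [Nat.choose_two_right, ← sum_range_id, Nat.cast_sum]
  calc ∑ j ∈ range r, ((a + j) / ε - (c + j))
      = ∑ j ∈ range r, ((a / ε - c) + (j : ℝ) * (1 / ε - 1)) := sum_congr rfl fun j _ => by ring
    _ = r * (a / ε - c) + r.choose 2 * (1 / ε - 1) := by
      rw [sum_add_distrib, sum_const, card_range, nsmul_eq_mul, ← sum_mul, hid]

theorem sum_choose_mul_pow_mul_sum_range_div_sub_eq (m : ℕ) (a c : ℝ) {ε x : ℝ} (hε : ε ≠ 0)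
    (hw : 1 - ε * x ≠ 0) :
    ∑ r ∈ range (m + 1), (m.choose r : ℝ) * (-(ε * x)) ^ r *
        ∑ j ∈ range r, ((a + j) / ε - (c + j)) =
      (1 - ε * x) ^ m * (-(m / ε) * ((a - ε * c) * (ε * x / (1 - ε * x))
        + ((m - 1) * (ε - 1) / 2) * (ε * x / (1 - ε * x)) ^ 2)) := by
  set y := -(ε * x)
  have hsplit : ∑ r ∈ range (m + 1), (m.choose r : ℝ) * y ^ r *
      ∑ j ∈ range r, ((a + j) / ε - (c + j)) =
      (a / ε - c) * ∑ r ∈ range (m + 1), (m.choose r * r.choose 1 : ℝ) * y ^ r +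
        (1 / ε - 1) * ∑ r ∈ range (m + 1), (m.choose r * r.choose 2 : ℝ) * y ^ r := by
    rw [mul_sum, mul_sum, ← sum_add_distrib]
    refine sum_congr rfl fun r _ => ?_
    rw [sum_range_div_sub, Nat.choose_one_right]
    ring
  have hy : 1 + y = 1 - ε * x := (sub_eq_add_neg _ _).symm
  have h1 := sum_range_choose_mul_choose_mul_pow m 1 y
  have h2 := sum_range_choose_mul_choose_mul_pow m 2 y
  rw [hy] at h1 h2
  rw [hsplit, eq_div_of_mul_eq (pow_ne_zero _ hw) h1, eq_div_of_mul_eq (pow_ne_zero _ hw) h2,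
    Nat.choose_one_right, Nat.cast_choose_two]
  field_simp
  ring

theorem terminating_2F1_expansion_general (m : ℕ) (a c ε x : ℝ)
    (hε : 0 < ε) (hεx : ε * x ≠ 1) :
    ((fun lam : ℝ =>
        (∑ r ∈ Finset.range (m + 1), (m.choose r : ℝ) * (-x) ^ r *
            ((ascPochhammer ℝ r).eval (a + ε * lam) / (ascPochhammer ℝ r).eval (c + lam)))
          - (1 - ε * x) ^ m * (1 - (m / (ε * lam)) *
              ((a - ε * c) * (ε * x / (1 - ε * x))
                + ((m - 1) * (ε - 1) / 2) * (ε * x / (1 - ε * x)) ^ 2)))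
      =O[atTop] fun lam : ℝ => 1 / lam ^ 2) ∧
    Tendsto
      (fun lam : ℝ => lam *
        ((∑ r ∈ Finset.range (m + 1), (m.choose r : ℝ) * (-x) ^ r *
            ((ascPochhammer ℝ r).eval (a + ε * lam) / (ascPochhammer ℝ r).eval (c + lam)))
              / (1 - ε * x) ^ m - 1))
      atTop
      (𝓝 (-(m / ε) * ((a - ε * c) * (ε * x / (1 - ε * x))
          + ((m - 1) * (ε - 1) / 2) * (ε * x / (1 - ε * x)) ^ 2))) := by
  have hw : 1 - ε * x ≠ 0 := sub_ne_zero.2 hεx.symm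
  have hA : ∑ r ∈ range (m + 1), (m.choose r : ℝ) * (-(ε * x)) ^ r = (1 - ε * x) ^ m := by
    simpa [sub_eq_add_neg] using sum_range_choose_mul_choose_mul_pow m 0 (-(ε * x))
  have h := hasFirstOrderExpansion_terminating_hypergeometric m a c hε.ne' x
  rw [hA, sum_choose_mul_pow_mul_sum_range_div_sub_eq m a c hε.ne' hw] at h
  refine ⟨h.congr_left fun t => by ring, ?_⟩
  have hlim := h.tendsto_mul_div_sub_one (pow_ne_zero m hw)
  rwa [mul_div_cancel_left₀ _ (pow_ne_zero m hw)] at hlim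

/-- Asymptotics (5.3) to first order for the terminating hypergeometric function
`F(λ) = ₂F₁(a+ελ, -m; c+λ; x) = Σ_{r=0}^m C(m,r) (-x)^r (a+ελ)_r/(c+λ)_r`: with
`X = εx/(1-εx)`, as `λ → +∞`,
`F(λ) = (1-εx)^m (1 - (m/(ελ))((a-εc)X + ((m-1)(ε-1)/2)X²)) + O(λ⁻²)`; equivalently,
`λ ((1-εx)^{-m} F(λ) - 1) → -(m/ε)((a-εc)X + ((m-1)(ε-1)/2)X²)`. -/
theorem terminating_2F1_expansion (m : ℕ) (hm : 1 ≤ m) (a c ε x : ℝ)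
    (hε : 0 < ε) (hx0 : 0 < x) (hx1 : x < 1) (hεx : ε * x ≠ 1) :
    ((fun lam : ℝ =>
        (∑ r ∈ Finset.range (m + 1), (m.choose r : ℝ) * (-x) ^ r *
            ((ascPochhammer ℝ r).eval (a + ε * lam) / (ascPochhammer ℝ r).eval (c + lam)))
          - (1 - ε * x) ^ m * (1 - (m / (ε * lam)) *
              ((a - ε * c) * (ε * x / (1 - ε * x))
                + ((m - 1) * (ε - 1) / 2) * (ε * x / (1 - ε * x)) ^ 2)))
      =O[atTop] fun lam : ℝ => 1 / lam ^ 2) ∧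
    Tendsto
      (fun lam : ℝ => lam *
        ((∑ r ∈ Finset.range (m + 1), (m.choose r : ℝ) * (-x) ^ r *
            ((ascPochhammer ℝ r).eval (a + ε * lam) / (ascPochhammer ℝ r).eval (c + lam)))
              / (1 - ε * x) ^ m - 1))
      atTop
      (𝓝 (-(m / ε) * ((a - ε * c) * (ε * x / (1 - ε * x))
          + ((m - 1) * (ε - 1) / 2) * (ε * x / (1 - ε * x)) ^ 2))) :=
  terminating_2F1_expansion_general m a c ε x hε hεx
end
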